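/- arXiv:math/0306416 — 11 statements merged into one kernel-verified Lean document; each statement's English description precedes it below -/
import Mathlib

section
/- Let A = (Q, Σ, δ, q₀, F) be a DFA recognizing a language L. Define the DFA A′ = (Q^Q, Σ, δ′, q₀′, F′) whose states are all transformations of Q, with initial state q₀′ = id (the identity transformation), transition function δ′(f, a) = f δ_a (i.e., (δ′(f,a))(q) = δ(f(q), a) for all q ∈ Q), where δ_a(q) := δ(q, a), and final states F′ = {f ∈ Q^Q : f^m(q₀) ∈ F for some integer m ≥ 1}. Then L(A′) = root(L). In particular, if L is regular then root(L) is regular. -/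
/-- `root L` = words some positive power of which lies in `L`. -/
def root {A : Type} (L : Language A) : Language A :=
  {w | ∃ m : ℕ, 1 ≤ m ∧ (List.replicate m w).flatten ∈ L}

/-- A language is regular if some DFA with finitely many states recognizes it. -/
def IsReg {A : Type} (L : Language A) : Prop :=
  ∃ (σ : Type) (_ : Fintype σ) (M : DFA A σ), M.accepts = L

/-- The state complexity of a language: the least number of states of a DFA recognizing it. -/
noncomputable def sc {A : Type} (L : Language A) : ℕ :=
  sInf {m | ∃ (σ : Type) (_ : Fintype σ) (M : DFA A σ), M.accepts = L ∧ Fintype.card σ = m}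

/-!
After reading `w`, the transformation automaton is in the state `q ↦ δ(q, w)`, and the `m`-th
iterate of this map sends `q₀` to `δ(q₀, wᵐ)`. So it accepts `w` exactly when `δ(q₀, wᵐ) ∈ F`
for some `m ≥ 1`, i.e. when `w ∈ root L`.
-/

namespace DFA

section

variable {α σ : Type*} (M : DFA α σ)

def rootDFA : DFA α (σ → σ) where
  step f a := fun q => M.step (f q) a
  start := id
  accept := {f | ∃ m : ℕ, 1 ≤ m ∧ f^[m] M.start ∈ M.accept}

theorem rootDFA_evalFrom (f : σ → σ) (w : List α) :
    M.rootDFA.evalFrom f w = fun q => M.evalFrom (f q) w := by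
  induction w generalizing f with
  | nil => rfl
  | cons a w ih => exact ih _

theorem rootDFA_eval (w : List α) : M.rootDFA.eval w = fun q => M.evalFrom q w :=
  M.rootDFA_evalFrom id w

theorem iterate_evalFrom (w : List α) (m : ℕ) (s : σ) :
    (fun q => M.evalFrom q w)^[m] s = M.evalFrom s (List.replicate m w).flatten := by
  induction m generalizing s with
  | zero => rfl
  | succ m ih =>
    rw [Function.iterate_succ_apply, ih, List.replicate_succ, List.flatten_cons,
      evalFrom_of_append]

end

theorem accepts_rootDFA {α σ : Type} (M : DFA α σ) : M.rootDFA.accepts = root M.accepts := by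
  ext w
  rw [mem_accepts, rootDFA_eval]
  exact exists_congr fun m => and_congr_right fun _ => by rw [iterate_evalFrom]; rfl

end DFA

theorem IsReg.root {α : Type} {L : Language α} (hL : IsReg L) : IsReg (root L) := by
  obtain ⟨σ, _, M, rfl⟩ := hL
  classical
  exact ⟨σ → σ, inferInstance, M.rootDFA, M.accepts_rootDFA⟩

theorem theorem_1_1_general {α σ : Type} (A : DFA α σ) (L : Language α)
    (hL : A.accepts = L) :
    (DFA.mk (fun (f : σ → σ) (a : α) => fun q => A.step (f q) a) (id : σ → σ)
        {f : σ → σ | ∃ m : ℕ, 1 ≤ m ∧ f^[m] A.start ∈ A.accept}).accepts = root L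
    ∧ (∀ L' : Language α, IsReg L' → IsReg (root L')) :=
  ⟨hL ▸ A.accepts_rootDFA, fun _ => IsReg.root⟩

/-- **Theorem 1.1.** Given a DFA `A` recognizing `L`, the DFA `A'` whose states are all
transformations of the state set of `A`, with start state the identity, transition
function `(f, a) ↦ (q ↦ δ (f q) a)`, and final states those `f` with `f^[m] q₀ ∈ F` for
some `m ≥ 1`, recognizes `root L`.  In particular, if `L` is regular then so is
`root L`. -/
theorem theorem_1_1 {α σ : Type} [Fintype σ] (A : DFA α σ) (L : Language α)
    (hL : A.accepts = L) :
    (DFA.mk (fun (f : σ → σ) (a : α) => fun q => A.step (f q) a) (id : σ → σ)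
        {f : σ → σ | ∃ m : ℕ, 1 ≤ m ∧ f^[m] A.start ∈ A.accept}).accepts = root L
    ∧ (∀ L' : Language α, IsReg L' → IsReg (root L')) :=
  theorem_1_1_general A L hL
end

section
/- For every regular language L, if sc(L) = n then sc(root(L)) ≤ n^n. -/
/-!
Run a minimal DFA `M` for `L` on all states at once: the state reached on `w` is the map
`q ↦ δ(q, w)`, and `w ∈ root L` iff some positive iterate of this map sends the start state
into an accepting one. This transition-monoid automaton has `|Q| ^ |Q|` states.
-/

def rootDFA {A σ : Type} (M : DFA A σ) : DFA A (σ → σ) where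
  step f a := fun q => M.step (f q) a
  start := id
  accept := {f | ∃ m : ℕ, 1 ≤ m ∧ f^[m] M.start ∈ M.accept}

section RootDFA

variable {A σ : Type} (M : DFA A σ)

theorem rootDFA_evalFrom (w : List A) (f : σ → σ) :
    (rootDFA M).evalFrom f w = fun q => M.evalFrom (f q) w := by
  induction w generalizing f with
  | nil => rfl
  | cons a w ih => exact ih _

theorem DFA.evalFrom_flatten_replicate (w : List A) (m : ℕ) (q : σ) :
    M.evalFrom q (List.replicate m w).flatten = (fun p => M.evalFrom p w)^[m] q := by
  induction m generalizing q with
  | zero => rfl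
  | succ m ih =>
    rw [List.replicate_succ, List.flatten_cons, DFA.evalFrom_of_append,
      Function.iterate_succ_apply, ih]

theorem rootDFA_accepts : (rootDFA M).accepts = root M.accepts := by
  ext w
  have hrun : (rootDFA M).eval w = fun q => M.evalFrom q w := rootDFA_evalFrom M w id
  simp only [DFA.mem_accepts, root, DFA.eval, DFA.evalFrom_flatten_replicate]
  rw [← DFA.eval, hrun]
  rfl

end RootDFA

section StateComplexity

variable {A : Type} {L : Language A}

theorem sc_le_card {σ : Type} [Fintype σ] (M : DFA A σ) (hM : M.accepts = L) :
    sc L ≤ Fintype.card σ :=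
  Nat.sInf_le ⟨σ, inferInstance, M, hM, rfl⟩

theorem IsReg.exists_dfa_card_eq_sc (hL : IsReg L) :
    ∃ (σ : Type) (_ : Fintype σ) (M : DFA A σ), M.accepts = L ∧ Fintype.card σ = sc L := by
  obtain ⟨σ, hσ, M, hM⟩ := hL
  exact Nat.sInf_mem
    (s := {m | ∃ (σ : Type) (_ : Fintype σ) (M : DFA A σ), M.accepts = L ∧ Fintype.card σ = m})
    ⟨Fintype.card σ, σ, hσ, M, hM, rfl⟩

end StateComplexity

/-- **Corollary 1.2.** If `sc L = n` for a regular language `L`, then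
`sc (root L) ≤ n ^ n`. -/
theorem corollary_1_2 {A : Type} (L : Language A) (n : ℕ)
    (hreg : IsReg L) (hsc : sc L = n) :
    sc (root L) ≤ n ^ n := by
  obtain ⟨σ, _, M, hM, hcard⟩ := hreg.exists_dfa_card_eq_sc
  classical
  calc sc (root L) ≤ Fintype.card (σ → σ) := sc_le_card (rootDFA M) (by rw [rootDFA_accepts, hM])
    _ = n ^ n := by rw [Fintype.card_fun, hcard, hsc]
end

section
/- For every integer n ≥ 2, the language L_n = {a^{n−2}} over the one-letter alphabet {a} satisfies sc(L_n) = n and sc(root(L_n)) = n; hence the bound sc(root(L)) ≤ sc(L) for unary regular languages is tight. -/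
/-!
Over a unary alphabet, `L_n = {a^k}` with `k = n - 2` is the set of words of length `k`, and
`root L_n` is the set of words whose length divides `k`. Both are of the form
`{w | |w| ∈ S}` with `max S = k`, and every such language has state complexity exactly `k + 2`:
a counter that saturates at `k + 1` recognizes it, and conversely the states reached on
`a^0, …, a^(k+1)` must be pairwise distinct, since `a^i · a^(k-i) = a^k` is accepted while
`a^j · a^(k-i)` is too long to be for `j > i`.
-/

theorem Language.singleton_replicate_eq_setOf_length {A : Type} [Subsingleton A] (a : A)
    (k : ℕ) : ({List.replicate k a} : Language A) = {w | w.length = k} := by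
  ext w
  change w = List.replicate k a ↔ w.length = k
  rw [List.eq_replicate_iff]
  simp [Subsingleton.elim _ a]

theorem root_setOf_length_mem {A : Type} (S : Set ℕ) :
    root {w : List A | w.length ∈ S} = {w | ∃ m, 1 ≤ m ∧ m * w.length ∈ S} := by
  ext w
  change (∃ m, 1 ≤ m ∧ (List.replicate m w).flatten.length ∈ S) ↔ ∃ m, 1 ≤ m ∧ m * w.length ∈ S
  simp

theorem DFA.append_mem_accepts_iff_of_eval_eq {A σ : Type} (M : DFA A σ) {x y : List A}
    (h : M.eval x = M.eval y) (z : List A) : x ++ z ∈ M.accepts ↔ y ++ z ∈ M.accepts := by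
  simp only [DFA.mem_accepts, DFA.eval, DFA.evalFrom_of_append] at h ⊢
  rw [h]

section LengthLanguage

variable {A : Type} (k : ℕ) (S : Set ℕ)

def lengthCounter : DFA A (Fin (k + 2)) where
  step s _ := ⟨min (s + 1) (k + 1), by omega⟩
  start := 0
  accept := {s | s.val ∈ S}

theorem lengthCounter_evalFrom_val (s : Fin (k + 2)) (w : List A) :
    ((lengthCounter k S).evalFrom s w).val = min (s + w.length) (k + 1) := by
  induction w generalizing s with
  | nil => rw [DFA.evalFrom_nil, List.length_nil]; omega
  | cons b w ih =>
    rw [DFA.evalFrom_cons, ih]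
    simp only [lengthCounter, List.length_cons]
    omega

variable {k S}

theorem lengthCounter_accepts (hS : ∀ j ∈ S, j ≤ k) :
    (lengthCounter k S).accepts = {w : List A | w.length ∈ S} := by
  ext w
  change ((lengthCounter k S).evalFrom 0 w).val ∈ S ↔ w.length ∈ S
  rw [lengthCounter_evalFrom_val, Fin.val_zero, zero_add]
  by_cases hw : w.length ≤ k + 1
  · rw [min_eq_left hw]
  · have hnot : ∀ j, k < j → j ∉ S := fun j hj hjS => absurd (hS j hjS) (by omega)
    exact iff_of_false (hnot _ (by omega)) (hnot _ (by omega))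

theorem card_le_of_accepts_eq_setOf_length_mem (a : A) {σ : Type} [Fintype σ] (M : DFA A σ)
    (hM : M.accepts = {w | w.length ∈ S}) (hk : k ∈ S) (hS : ∀ j ∈ S, j ≤ k) :
    k + 2 ≤ Fintype.card σ := by
  have hinj : Function.Injective fun i : Fin (k + 2) => M.eval (List.replicate i a) := by
    refine Function.Injective.of_lt_imp_ne fun i j hij heq => ?_
    have hsuffix : ∀ l, List.replicate l a ++ List.replicate (k - i) a ∈ M.accepts ↔
        l + (k - i) ∈ S := fun l => by
      rw [hM, ← List.replicate_add]
      exact Iff.of_eq (congrArg (· ∈ S) List.length_replicate)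
    have hi : i + (k - i) ∈ S := by rwa [show i.val + (k - i) = k by omega]
    rw [← hsuffix, M.append_mem_accepts_iff_of_eval_eq heq, hsuffix] at hi
    have := hS _ hi
    omega
  simpa using Fintype.card_le_of_injective _ hinj

theorem sc_setOf_length_mem (a : A) (hk : k ∈ S) (hS : ∀ j ∈ S, j ≤ k) :
    sc {w : List A | w.length ∈ S} = k + 2 := by
  have hcounter : k + 2 ∈ {m | ∃ (σ : Type) (_ : Fintype σ) (M : DFA A σ),
      M.accepts = {w : List A | w.length ∈ S} ∧ Fintype.card σ = m} :=
    ⟨Fin (k + 2), inferInstance, lengthCounter k S, lengthCounter_accepts hS, by simp⟩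
  refine le_antisymm (Nat.sInf_le hcounter) (le_csInf ⟨_, hcounter⟩ ?_)
  rintro m ⟨σ, _, M, hM, rfl⟩
  exact card_le_of_accepts_eq_setOf_length_mem a M hM hk hS

end LengthLanguage

/-- **Proposition 2.1 (tightness).** For every `n ≥ 2`, the language `L_n = {a^(n-2)}`
over the one-letter alphabet `{a}` satisfies `sc L_n = n` and `sc (root L_n) = n`;
hence the bound `sc (root L) ≤ sc L` for unary regular languages is tight. -/
theorem proposition_2_1_tight {A : Type} [Fintype A] (hA : Fintype.card A = 1) (a : A)
    (n : ℕ) (hn : 2 ≤ n) (L : Language A) (hL : L = {List.replicate (n - 2) a}) :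
    sc L = n ∧ sc (root L) = n := by
  have : Subsingleton A := Fintype.card_le_one_iff_subsingleton.mp hA.le
  obtain ⟨k, rfl⟩ : ∃ k, n = k + 2 := ⟨n - 2, by omega⟩
  have hL' : L = {w | w.length ∈ ({k} : Set ℕ)} := by
    rw [hL, Nat.add_sub_cancel, Language.singleton_replicate_eq_setOf_length]
    rfl
  rw [hL', root_setOf_length_mem]
  refine ⟨sc_setOf_length_mem a rfl fun j hj => hj.le, ?_⟩
  refine sc_setOf_length_mem (S := {j | ∃ m, 1 ≤ m ∧ m * j ∈ ({k} : Set ℕ)}) a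
    ⟨1, le_rfl, one_mul k⟩ ?_
  rintro j ⟨m, hm, hmj⟩
  calc j ≤ m * j := Nat.le_mul_of_pos_left j hm
    _ = k := hmj
end

section
/- Let L be a regular language and let A = (Q, Σ, δ, q₀, F) be a DFA recognizing L with the minimal number of states. Let M = {δ_w : w ∈ Σ*} be the transformation monoid of A, where δ_w(q) := δ(q, w). Then sc(root(L)) ≤ |M|. -/
theorem sc_le_natCard {A τ : Type} [Finite τ] (N : DFA A τ) : sc N.accepts ≤ Nat.card τ := by
  have := Fintype.ofFinite τ
  exact Nat.sInf_le ⟨τ, inferInstance, N, rfl, Fintype.card_eq_nat_card⟩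

namespace DFA

section transformations

variable {α σ : Type*} (M : DFA α σ)

theorem evalFrom_flatten_replicate_s4 (w : List α) (m : ℕ) (q : σ) :
    M.evalFrom q (List.replicate m w).flatten = (M.evalFrom · w)^[m] q := by
  induction m generalizing q with
  | zero => rfl
  | succ m ih =>
    rw [List.replicate_succ, List.flatten_cons, evalFrom_of_append, ih,
      Function.iterate_succ_apply]

def transformations : Set (σ → σ) :=
  Set.range fun w q => M.evalFrom q w

theorem comp_mem_transformations {f : σ → σ} (hf : f ∈ M.transformations) (a : α) :
    (M.step · a) ∘ f ∈ M.transformations := by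
  obtain ⟨w, rfl⟩ := hf
  exact ⟨w ++ [a], funext fun q => evalFrom_append_singleton M q w a⟩

def transformationDFA : DFA α M.transformations where
  step f a := ⟨(M.step · a) ∘ f.1, M.comp_mem_transformations f.2 a⟩
  start := ⟨id, [], rfl⟩
  accept := {f | ∃ m, 1 ≤ m ∧ f.1^[m] M.start ∈ M.accept}

theorem coe_transformationDFA_eval (w : List α) :
    (M.transformationDFA.eval w : σ → σ) = (M.evalFrom · w) := by
  induction w using List.reverseRecOn with
  | nil => rfl
  | append_singleton w a ih =>
    funext q
    rw [eval_append_singleton, evalFrom_append_singleton, ← congrFun ih q]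
    rfl

end transformations

theorem accepts_transformationDFA {α σ : Type} (M : DFA α σ) :
    M.transformationDFA.accepts = root M.accepts := by
  ext w
  change (∃ m, 1 ≤ m ∧ (M.transformationDFA.eval w : σ → σ)^[m] M.start ∈ M.accept) ↔ _
  simp only [coe_transformationDFA_eval, ← evalFrom_flatten_replicate_s4]
  rfl

end DFA

theorem corollary_3_1_general {A : Type} (L : Language A) {σ : Type} [Fintype σ]
    (M : DFA A σ) (hacc : M.accepts = L) :
    sc (root L) ≤ Set.ncard {f : σ → σ | ∃ w : List A, ∀ q, f q = M.evalFrom q w} := by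
  have hmonoid : {f : σ → σ | ∃ w : List A, ∀ q, f q = M.evalFrom q w} = M.transformations :=
    Set.ext fun _ => exists_congr fun _ => funext_iff.symm.trans eq_comm
  subst hacc
  rw [hmonoid, ← Nat.card_coe_set_eq, ← M.accepts_transformationDFA]
  exact sc_le_natCard _

/-- **Corollary 3.1.** Let `M` be a minimal DFA recognizing `L`.  If `Mon` is the
transformation monoid of `M` (the set of transformations `δ_w`, `w` a word), then
`sc (root L) ≤ |Mon|`. -/
theorem corollary_3_1 {A : Type} (L : Language A) {σ : Type} [Fintype σ]
    (M : DFA A σ) (hacc : M.accepts = L) (hmin : Fintype.card σ = sc L) :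
    sc (root L) ≤ Set.ncard {f : σ → σ | ∃ w : List A, ∀ q, f q = M.evalFrom q w} :=
  corollary_3_1_general L M hacc
end

section
/- For n ≥ 3, if H ⊆ T_n generates T_n (as a monoid), then |H| ≥ 3. Furthermore, |H| = 3 if and only if H can be written as H = {α, β, γ}, where α and β are permutations such that {α, β} generates S_n and rank(γ) = n − 1. -/
/-- The submonoid of transformations of `Fin n` generated by `X`:
all finite compositions of elements of `X` (including the identity). -/
def MGen {n : ℕ} (X : Set (Fin n → Fin n)) : Set (Fin n → Fin n) :=
  {f | ∃ l : List (Fin n → Fin n), (∀ g ∈ l, g ∈ X) ∧ f = l.foldr (· ∘ ·) id}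

/-- The rank of a transformation: the number of elements of its image. -/
def rank {n : ℕ} (f : Fin n → Fin n) : ℕ := (Finset.image f Finset.univ).card

/-- The permutation of `Z_n = {1,…,n}` (coded as `Fin n`, with `i : Fin n` standing for
`i+1 ∈ Z_n`) with cycle decomposition `(1 2 ⋯ k)(k+1 k+2 ⋯ n)`. -/
def twoCycle (n k : ℕ) (i : Fin n) : Fin n :=
  ⟨(if i.val + 1 = k then 0 else if i.val + 1 = n then k else i.val + 1) % n,
    Nat.mod_lt _ i.pos⟩

/-- The set `U_{k,l} ⊆ T_n` (with `l = n - k`): all `γ` such that exactly one of the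
following holds: (1) `γ = α^m` for some `m ≥ 1`, where `α = (1 ⋯ k)(k+1 ⋯ n)`;
(2) `γ(i) = γ(j)` for some `i ∈ {1,…,k}`, `j ∈ {k+1,…,n}`, and some
`m ∈ {k+1,…,n}` is not in the image of `γ`. -/
def Ukl (n k : ℕ) : Set (Fin n → Fin n) :=
  {γ | Xor'
    (∃ m : ℕ, 1 ≤ m ∧ γ = (twoCycle n k)^[m])
    ((∃ i j : Fin n, i.val < k ∧ k ≤ j.val ∧ γ i = γ j) ∧
      ∃ m : Fin n, k ≤ m.val ∧ m ∉ Set.range γ)}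

lemma mgen_mono {n : ℕ} {X Y : Set (Fin n → Fin n)} (h : X ⊆ Y) : MGen X ⊆ MGen Y := by
  rintro f ⟨l, hl, rfl⟩; exact ⟨l, fun g hg => h (hl g hg), rfl⟩

lemma foldr_bij {n : ℕ} (l : List (Fin n → Fin n)) (h : ∀ g ∈ l, Function.Bijective g) :
    Function.Bijective (l.foldr (· ∘ ·) id) := by
  induction l with
  | nil => simpa using Function.bijective_id
  | cons a t ih =>
    simp only [List.foldr_cons]
    exact (h a (by simp)).comp (ih fun g hg => h g (List.mem_cons_of_mem _ hg))

lemma bij_of_foldr {n : ℕ} (l : List (Fin n → Fin n))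
    (h : Function.Bijective (l.foldr (· ∘ ·) id)) :
    ∀ g ∈ l, Function.Bijective g := by
  induction l with
  | nil => simp
  | cons a t ih =>
    simp only [List.foldr_cons] at h
    have ha : Function.Bijective a := Finite.surjective_iff_bijective.mp h.surjective.of_comp
    have ht : Function.Bijective (t.foldr (· ∘ ·) id) :=
      Finite.injective_iff_bijective.mp (h.injective.of_comp)
    intro g hg
    rcases List.mem_cons.mp hg with rfl | hg
    · exact ha
    · exact ih ht g hg

lemma rank_le_n {n : ℕ} (f : Fin n → Fin n) : rank f ≤ n := by
  simpa [rank] using Finset.card_image_le (s := (Finset.univ : Finset (Fin n))) (f := f)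

lemma rank_comp_le_left {n : ℕ} (f g : Fin n → Fin n) : rank (f ∘ g) ≤ rank f := by
  apply Finset.card_le_card
  intro y hy
  simp only [Finset.mem_image] at hy ⊢
  obtain ⟨x, -, rfl⟩ := hy
  exact ⟨g x, Finset.mem_univ _, rfl⟩

lemma rank_comp_le_right {n : ℕ} (f g : Fin n → Fin n) : rank (f ∘ g) ≤ rank g := by
  unfold rank
  rw [show Finset.image (f ∘ g) Finset.univ = Finset.image f (Finset.image g Finset.univ) from
    (Finset.image_image).symm]
  exact Finset.card_image_le

lemma rank_foldr_le {n : ℕ} (l : List (Fin n → Fin n)) :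
    ∀ g ∈ l, rank (l.foldr (· ∘ ·) id) ≤ rank g := by
  induction l with
  | nil => simp
  | cons a t ih =>
    intro g hg
    simp only [List.foldr_cons]
    rcases List.mem_cons.mp hg with rfl | hg
    · exact rank_comp_le_left _ _
    · exact (rank_comp_le_right _ _).trans (ih g hg)

lemma rank_eq_n_iff {n : ℕ} (f : Fin n → Fin n) : rank f = n ↔ Function.Bijective f := by
  constructor
  · intro h
    have himg : Finset.image f Finset.univ = Finset.univ :=
      Finset.eq_univ_of_card _ (by simpa [rank] using h)
    have hs : Function.Surjective f := by
      intro y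
      have : y ∈ Finset.image f Finset.univ := by rw [himg]; exact Finset.mem_univ y
      simpa using this
    exact Finite.surjective_iff_bijective.mp hs
  · intro h
    unfold rank
    rw [Finset.image_univ_of_surjective h.surjective]
    simp

lemma foldr_const {n : ℕ} (a : Fin n → Fin n) (l : List (Fin n → Fin n))
    (h : ∀ g ∈ l, g = a) : l.foldr (· ∘ ·) id = a^[l.length] := by
  induction l with
  | nil => simp
  | cons b t ih =>
    simp only [List.foldr_cons, List.length_cons]
    rw [h b (by simp), ih (fun g hg => h g (by simp [hg])), ← Function.iterate_succ' a]

lemma comm_single {n : ℕ} {a f g : Fin n → Fin n}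
    (hf : f ∈ MGen {a}) (hg : g ∈ MGen {a}) : f ∘ g = g ∘ f := by
  obtain ⟨l, hl, rfl⟩ := hf
  obtain ⟨m, hm, rfl⟩ := hg
  rw [foldr_const a l (fun x hx => hl x hx), foldr_const a m (fun x hx => hm x hx),
    ← Function.iterate_add, ← Function.iterate_add, Nat.add_comm]

lemma noncomm {n : ℕ} (hn : 3 ≤ n) :
    ∃ f g : Fin n → Fin n, Function.Bijective f ∧ Function.Bijective g ∧ f ∘ g ≠ g ∘ f := by
  set a : Fin n := ⟨0, by omega⟩
  set b : Fin n := ⟨1, by omega⟩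
  set c : Fin n := ⟨2, by omega⟩
  have hab : a ≠ b := by simp [a, b, Fin.ext_iff]
  have hbc : b ≠ c := by simp [b, c, Fin.ext_iff]
  have hac : a ≠ c := by simp [a, c, Fin.ext_iff]
  refine ⟨Equiv.swap a b, Equiv.swap b c, (Equiv.swap a b).bijective, (Equiv.swap b c).bijective, ?_⟩
  intro h
  have := congrFun h a
  simp only [Function.comp_apply] at this
  rw [Equiv.swap_apply_of_ne_of_ne hab hac, Equiv.swap_apply_left,
    Equiv.swap_apply_left] at this
  exact hbc this

/-- **Lemma 3.4 (Dénes).** For `n ≥ 3`, any generating set `H` of the full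
transformation monoid `T_n` has at least `3` elements, and `|H| = 3` iff
`H = {α, β, γ}` where `α, β` are permutations generating the symmetric group `S_n`
and `γ` has rank `n - 1`. -/
theorem lemma_3_4 (n : ℕ) (hn : 3 ≤ n) (H : Set (Fin n → Fin n))
    (hgen : MGen H = Set.univ) :
    3 ≤ H.ncard ∧
      (H.ncard = 3 ↔ ∃ α β γ : Fin n → Fin n, H = {α, β, γ} ∧
        Function.Bijective α ∧ Function.Bijective β ∧
        MGen {α, β} = {f : Fin n → Fin n | Function.Bijective f} ∧
        rank γ = n - 1) := by
  have huniv : ∀ f : Fin n → Fin n, f ∈ MGen H := by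
    intro f; rw [hgen]; trivial
  have hkey : ∀ f : Fin n → Fin n, Function.Bijective f →
      f ∈ MGen {g | g ∈ H ∧ Function.Bijective g} := by
    intro f hf
    obtain ⟨l, hl, rfl⟩ := huniv f
    exact ⟨l, fun g hg => ⟨hl g hg, bij_of_foldr l hf g hg⟩, rfl⟩
  have hB2 : ∀ a : Fin n → Fin n, ¬ ({g | g ∈ H ∧ Function.Bijective g} ⊆ {a}) := by
    intro a ha
    obtain ⟨f, g, hfb, hgb, hne⟩ := noncomm hn
    exact hne (comm_single (mgen_mono ha (hkey f hfb)) (mgen_mono ha (hkey g hgb)))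
  obtain ⟨α, hαS, -⟩ := Set.not_subset.mp (hB2 id)
  obtain ⟨β, hβS, hβα⟩ := Set.not_subset.mp (hB2 α)
  obtain ⟨hαH, hαb⟩ := hαS
  obtain ⟨hβH, hβb⟩ := hβS
  have hαβ : α ≠ β := fun h => hβα (by simp [h])
  -- a non-bijective map of rank ≥ n - 1
  set p0 : Fin n := ⟨0, by omega⟩ with hp0
  set p1 : Fin n := ⟨1, by omega⟩ with hp1
  have hp : p0 ≠ p1 := by simp [hp0, hp1, Fin.ext_iff]
  set f0 : Fin n → Fin n := fun i => if i = p0 then p1 else i with hf0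
  have hf0nb : ¬ Function.Bijective f0 := by
    intro h
    have : f0 p0 = f0 p1 := by simp [hf0, hp.symm]
    exact hp (h.injective this)
  have hf0rank : n - 1 ≤ rank f0 := by
    have hsub : Finset.univ.erase p0 ⊆ Finset.image f0 Finset.univ := by
      intro y hy
      have hy0 : y ≠ p0 := Finset.ne_of_mem_erase hy
      exact Finset.mem_image.mpr ⟨y, Finset.mem_univ _, by simp [hf0, hy0]⟩
    have := Finset.card_le_card hsub
    simpa [rank, Finset.card_erase_of_mem] using this
  obtain ⟨l0, hl0, hf0eq⟩ := huniv f0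
  have hexnb : ∃ g ∈ l0, ¬ Function.Bijective g := by
    by_contra hc
    push_neg at hc
    exact hf0nb (hf0eq ▸ foldr_bij l0 hc)
  obtain ⟨γ, hγl, hγnb⟩ := hexnb
  have hγH : γ ∈ H := hl0 γ hγl
  have hγrank_ge : n - 1 ≤ rank γ := hf0rank.trans (hf0eq ▸ rank_foldr_le l0 γ hγl)
  have hγα : γ ≠ α := fun h => hγnb (h ▸ hαb)
  have hγβ : γ ≠ β := fun h => hγnb (h ▸ hβb)
  have hsub3 : ({α, β, γ} : Set (Fin n → Fin n)) ⊆ H := by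
    intro x hx
    rcases hx with rfl | rfl | rfl
    · exact hαH
    · exact hβH
    · exact hγH
  have hcard3 : ({α, β, γ} : Set (Fin n → Fin n)).ncard = 3 := by
    rw [Set.ncard_insert_of_notMem (by simp [hαβ, hγα.symm]),
      Set.ncard_insert_of_notMem (by simp [hγβ.symm]), Set.ncard_singleton]
  have hge : 3 ≤ H.ncard := hcard3 ▸ Set.ncard_le_ncard hsub3 (Set.toFinite H)
  refine ⟨hge, ?_, ?_⟩
  · -- ncard = 3 → witnesses
    intro h3
    have heq : ({α, β, γ} : Set (Fin n → Fin n)) = H :=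
      Set.eq_of_subset_of_ncard_le hsub3 (le_of_eq (h3.trans hcard3.symm)) (Set.toFinite H)
    refine ⟨α, β, γ, heq.symm, hαb, hβb, ?_, ?_⟩
    · ext f
      constructor
      · rintro ⟨l, hl, rfl⟩
        refine foldr_bij l fun g hg => ?_
        rcases hl g hg with rfl | rfl
        · exact hαb
        · exact hβb
      · intro hf
        refine mgen_mono ?_ (hkey f hf)
        rintro x ⟨hxH, hxb⟩
        rw [← heq] at hxH
        rcases hxH with rfl | rfl | rfl
        · exact Set.mem_insert _ _
        · exact Set.mem_insert_of_mem _ rfl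
        · exact absurd hxb hγnb
    · have h1 := rank_le_n γ
      have h2 : rank γ ≠ n := fun h => hγnb ((rank_eq_n_iff γ).mp h)
      omega
  · -- witnesses → ncard = 3
    rintro ⟨α', β', γ', hH, hα'b, hβ'b, hMG, hγ'r⟩
    have hγ'nb : ¬ Function.Bijective γ' := by
      intro h
      have := (rank_eq_n_iff γ').mpr h
      omega
    have hαβ' : α' ≠ β' := by
      intro he
      obtain ⟨f, g, hfb, hgb, hne⟩ := noncomm hn
      have hsub : ({α', β'} : Set (Fin n → Fin n)) ⊆ {α'} := by
        rw [← he]; simp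
      have hf' : f ∈ MGen {α'} := mgen_mono hsub (by rw [hMG]; exact hfb)
      have hg' : g ∈ MGen {α'} := mgen_mono hsub (by rw [hMG]; exact hgb)
      exact hne (comm_single hf' hg')
    have hαγ' : α' ≠ γ' := fun h => hγ'nb (h ▸ hα'b)
    have hβγ' : β' ≠ γ' := fun h => hγ'nb (h ▸ hβ'b)
    rw [hH, Set.ncard_insert_of_notMem (by simp [hαβ', hαγ']),
      Set.ncard_insert_of_notMem (by simp [hβγ']), Set.ncard_singleton]
end

section
/- Let k ≥ 2 and l ≥ 3 be coprime integers with k + l = n, let X_n ⊆ T_n be a finite set generating a submonoid M_n with U_{k,l} ⊆ M_n, and let Σ be a finite alphabet with |Σ| ≥ |X_n|. Then the minimal DFA recognizing root(L(A_{Σ,X_n})) has exactly |M_n| − n(n−1)/2 states; that is, sc(root(L(A_{Σ,X_n}))) = |M_n| − C(n,2). -/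
/-- `M` is a DFA based on `X ⊆ T_n`: each letter acts as an element of `X ∪ {id}`,
and every element of `X` is the action of some letter. -/
def IsBasedOn {n : ℕ} {A : Type} (X : Set (Fin n → Fin n)) (M : DFA A (Fin n)) : Prop :=
  ∃ Ψ : A → (Fin n → Fin n), (∀ a q, M.step q a = Ψ a q) ∧
    (∀ a, Ψ a ∈ X ∪ {id}) ∧ X ⊆ Set.range Ψ

/-- `M` is (a copy of) the DFA `A_{Σ,X}`: based on `X`, with start state `1`,
final-state set `{1}`, the letter actions given by a map `Ψ` that is bijective from an
`|X|`-element subset of the alphabet onto `X` and maps all other letters to the identity. -/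
def IsCanonical {n : ℕ} {A : Type} (X : Set (Fin n → Fin n)) (M : DFA A (Fin n)) : Prop :=
  M.start.val = 0 ∧ M.accept = {q : Fin n | q.val = 0} ∧
    ∃ Ψ : A → (Fin n → Fin n), (∀ a q, M.step q a = Ψ a q) ∧
      ∃ S : Set A, Set.BijOn Ψ S X ∧ ∀ a ∉ S, Ψ a = id

/-- The transformation `η` is a final state of the DFA `𝓜*` built from `𝓜`:
some positive iterate of `η` sends the start state of `𝓜` into its final states. -/
def StarFinal {n : ℕ} {A : Type} (M : DFA A (Fin n)) (η : Fin n → Fin n) : Prop :=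
  ∃ m : ℕ, 1 ≤ m ∧ η^[m] M.start ∈ M.accept

/-- `η` and `θ` are equivalent states of the DFA `𝓜*` built from `𝓜`
(reading a word `w` from state `η` in `𝓜*` leads to the transformation
`q ↦ δ_w(η q)`). -/
def StarEquiv {n : ℕ} {A : Type} (M : DFA A (Fin n)) (η θ : Fin n → Fin n) : Prop :=
  ∀ w : List A,
    StarFinal M (fun q => M.evalFrom (η q) w) ↔ StarFinal M (fun q => M.evalFrom (θ q) w)

/-- `x` is unique in the image of `ρ`: only one point maps to it. -/
def UniqueInImage {n : ℕ} (ρ : Fin n → Fin n) (x : Fin n) : Prop :=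
  ∀ i j : Fin n, ρ i = x → ρ j = x → i = j

/-- For a rank-2 transformation `η` with image `{i,j}`, `θ` is its complement:
`θ` sends points of `η⁻¹(i)` to `j` and points of `η⁻¹(j)` to `i`. -/
def IsCompl2 {n : ℕ} (η θ : Fin n → Fin n) : Prop :=
  ∀ z w : Fin n, η z ≠ η w → θ z = η w

namespace T311

variable {n : ℕ}

/-- the map sending `z ↦ i` and everything else to `j`. -/
def etaF (z i j : Fin n) : Fin n → Fin n := fun q => if q = z then i else j

/-- the map sending `a ↦ z` and everything else to `s`. -/
def rhoF (z s a : Fin n) : Fin n → Fin n := fun x => if x = a then z else s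

/-- `z` is a periodic point of `f`. -/
def SFz (z : Fin n) (f : Fin n → Fin n) : Prop := ∃ m : ℕ, 1 ≤ m ∧ f^[m] z = z

open Classical in
/-- canonical representative: swap an `etaF z i j` with `j < i` to `etaF z j i`. -/
noncomputable def canonF (z s₀ : Fin n) (f : Fin n → Fin n) : Fin n → Fin n :=
  if (∀ q, q ≠ z → f q = f s₀) ∧ f s₀ < f z then etaF z (f s₀) (f z) else f

lemma etaF_z (z i j : Fin n) : etaF z i j z = i := by simp [etaF]

lemma etaF_ne (z i j : Fin n) {q : Fin n} (hq : q ≠ z) : etaF z i j q = j := by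
  simp [etaF, hq]

lemma etaF_comp (ρ : Fin n → Fin n) (z i j : Fin n) :
    ρ ∘ etaF z i j = etaF z (ρ i) (ρ j) := by
  funext q; by_cases h : q = z <;> simp [etaF, h]

lemma etaF_inj {z s₀ i j i' j' : Fin n} (hs : s₀ ≠ z)
    (h : etaF z i j = etaF z i' j') : i = i' ∧ j = j' := by
  constructor
  · have := congrFun h z; simpa [etaF] using this
  · have := congrFun h s₀; simpa [etaF, hs] using this

lemma SFz_etaF {z i j : Fin n} : SFz z (etaF z i j) ↔ (i = z ∨ j = z) := by
  constructor
  · rintro ⟨m, hm, hz⟩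
    by_contra hc
    push_neg at hc
    obtain ⟨hi, hj⟩ := hc
    obtain ⟨t, rfl⟩ : ∃ t, m = t + 1 := ⟨m - 1, by omega⟩
    rw [Function.iterate_succ_apply'] at hz
    by_cases h : (etaF z i j)^[t] z = z
    · rw [h, etaF_z] at hz; exact hi hz
    · rw [etaF_ne _ _ _ h] at hz; exact hj hz
  · rintro (h | h)
    · exact ⟨1, le_refl 1, by simpa [etaF_z] using h⟩
    · refine ⟨2, by norm_num, ?_⟩
      show etaF z i j (etaF z i j z) = z
      rw [etaF_z]
      by_cases hi : i = z
      · rw [hi, etaF_z]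
      · rw [etaF_ne _ _ _ hi]; exact h

lemma isEta_etaF {z s₀ : Fin n} (hs : s₀ ≠ z) (i j : Fin n) :
    ∀ q, q ≠ z → etaF z i j q = etaF z i j s₀ := by
  intro q hq; rw [etaF_ne _ _ _ hq, etaF_ne _ _ _ hs]

lemma eta_of_isEta {z s₀ : Fin n} {f : Fin n → Fin n}
    (h : ∀ q, q ≠ z → f q = f s₀) : f = etaF z (f z) (f s₀) := by
  funext q
  by_cases hq : q = z
  · rw [hq, etaF_z]
  · rw [etaF_ne _ _ _ hq, h q hq]

lemma canonF_etaF {z s₀ : Fin n} (hs : s₀ ≠ z) (i j : Fin n) :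
    canonF z s₀ (etaF z i j) = if j < i then etaF z j i else etaF z i j := by
  unfold canonF
  rw [etaF_z, etaF_ne _ _ _ hs]
  by_cases h : j < i
  · rw [if_pos ⟨fun q hq => etaF_ne z i j hq, h⟩, if_pos h]
  · rw [if_neg (fun hc => h hc.2), if_neg h]

lemma canonF_etaF_symm {z s₀ : Fin n} (hs : s₀ ≠ z) (i j : Fin n) :
    canonF z s₀ (etaF z i j) = canonF z s₀ (etaF z j i) := by
  rcases lt_trichotomy i j with h | rfl | h
  · rw [canonF_etaF hs, canonF_etaF hs, if_neg (by omega), if_pos h]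
  · rfl
  · rw [canonF_etaF hs, canonF_etaF hs, if_pos h, if_neg (by omega)]

lemma canonF_spec (z s₀ : Fin n) (f : Fin n → Fin n) :
    canonF z s₀ f = f ∨
      ∃ i j : Fin n, j < i ∧ f = etaF z i j ∧ canonF z s₀ f = etaF z j i := by
  unfold canonF
  split
  · next h =>
      right
      exact ⟨f z, f s₀, h.2, eta_of_isEta h.1, rfl⟩
  · left; rfl

lemma canonF_comp_congr {z s₀ : Fin n} (hs : s₀ ≠ z) (ρ f : Fin n → Fin n) :
    canonF z s₀ (ρ ∘ canonF z s₀ f) = canonF z s₀ (ρ ∘ f) := by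
  rcases canonF_spec z s₀ f with h | ⟨i, j, hlt, hf, hc⟩
  · rw [h]
  · rw [hc, hf, etaF_comp, etaF_comp, canonF_etaF_symm hs]

lemma canonF_idem {z s₀ : Fin n} (hs : s₀ ≠ z) (f : Fin n → Fin n) :
    canonF z s₀ (canonF z s₀ f) = canonF z s₀ f := by
  rcases canonF_spec z s₀ f with h | ⟨i, j, hlt, hf, hc⟩
  · rw [h]; exact h
  · rw [hc, canonF_etaF hs, if_neg (by omega)]

lemma SFz_canonF {z s₀ : Fin n} (f : Fin n → Fin n) :
    SFz z (canonF z s₀ f) ↔ SFz z f := by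
  rcases canonF_spec z s₀ f with h | ⟨i, j, hlt, hf, hc⟩
  · rw [h]
  · rw [hc, hf, SFz_etaF, SFz_etaF, or_comm]

lemma canonF_ne_iff {z s₀ : Fin n} (hs : s₀ ≠ z) (f : Fin n → Fin n) :
    canonF z s₀ f ≠ f ↔ ∃ i j : Fin n, j < i ∧ f = etaF z i j := by
  constructor
  · intro h
    rcases canonF_spec z s₀ f with h' | ⟨i, j, hlt, hf, hc⟩
    · exact absurd h' h
    · exact ⟨i, j, hlt, hf⟩
  · rintro ⟨i, j, hlt, rfl⟩
    rw [canonF_etaF hs, if_pos hlt]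
    intro h
    have := (etaF_inj hs h).1
    omega
lemma canonF_id {z s₀ q : Fin n} (hq : q ≠ z) (hq' : q ≠ s₀) :
    canonF z s₀ (id : Fin n → Fin n) = id := by
  unfold canonF
  rw [if_neg]
  rintro ⟨h1, -⟩
  exact hq' (h1 q hq)

lemma canonF_eq_self_of_etaF {z s₀ : Fin n} (hs : s₀ ≠ z) {i j : Fin n}
    (h : canonF z s₀ (etaF z i j) = etaF z i j) (hij : i ≠ j) : ¬ j < i := by
  intro hlt
  rw [canonF_etaF hs, if_pos hlt] at h
  exact hij ((etaF_inj hs h).1.symm)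

end T311

namespace T311

variable {n k l : ℕ}

lemma twoCycle_surjective (hk : 2 ≤ k) (hkn : k < n) :
    Function.Surjective (twoCycle n k) := by
  intro y
  have hn0 : 0 < n := lt_of_le_of_lt (by omega) hkn
  by_cases h0 : y.val = 0
  · refine ⟨⟨k - 1, by omega⟩, ?_⟩
    apply Fin.ext
    show (if k - 1 + 1 = k then 0 else if k - 1 + 1 = n then k else k - 1 + 1) % n = y.val
    rw [if_pos (by omega), Nat.zero_mod]
    omega
  · by_cases hky : y.val = k
    · refine ⟨⟨n - 1, by omega⟩, ?_⟩
      apply Fin.ext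
      show (if n - 1 + 1 = k then 0 else if n - 1 + 1 = n then k else n - 1 + 1) % n = y.val
      rw [if_neg (by omega), if_pos (by omega)]
      rw [Nat.mod_eq_of_lt hkn]
      omega
    · refine ⟨⟨y.val - 1, by omega⟩, ?_⟩
      apply Fin.ext
      show (if y.val - 1 + 1 = k then 0 else if y.val - 1 + 1 = n then k
        else y.val - 1 + 1) % n = y.val
      have hy : y.val < n := y.isLt
      rw [if_neg (by omega), if_neg (by omega)]
      rw [Nat.mod_eq_of_lt (by omega)]
      omega

lemma twoCycle_injective (hk : 2 ≤ k) (hkn : k < n) :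
    Function.Injective (twoCycle n k) :=
  Finite.injective_iff_surjective.mpr (twoCycle_surjective hk hkn)

/-- sufficient condition for membership in `Ukl`. -/
lemma mem_Ukl_of (hk : 2 ≤ k) (hkn : k < n) {γ : Fin n → Fin n}
    (hcol : ∃ i j : Fin n, i.val < k ∧ k ≤ j.val ∧ γ i = γ j)
    (hmiss : ∃ m : Fin n, k ≤ m.val ∧ m ∉ Set.range γ)
    (hninj : ¬ Function.Injective γ) : γ ∈ Ukl n k := by
  refine Or.inr ⟨⟨hcol, hmiss⟩, ?_⟩
  rintro ⟨m, hm, rfl⟩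
  exact hninj ((twoCycle_injective hk hkn).iterate m)

lemma etaF_mem_Ukl (hk : 2 ≤ k) (hl : 3 ≤ l) (hn : k + l = n)
    {z : Fin n} (hz : z.val = 0) {i j : Fin n} (hij : i ≠ j) :
    etaF z i j ∈ Ukl n k := by
  have h1n : (1 : ℕ) < n := by omega
  refine mem_Ukl_of hk (by omega) ?_ ?_ ?_
  · refine ⟨⟨1, by omega⟩, ⟨k, by omega⟩, by simpa using by omega, by simp, ?_⟩
    rw [etaF_ne, etaF_ne]
    · intro h; have := congrArg Fin.val h; simp [hz] at this; omega
    · intro h; have := congrArg Fin.val h; simp [hz] at this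
  · have hrange : ∀ x ∈ Set.range (etaF z i j), x = i ∨ x = j := by
      rintro x ⟨q, rfl⟩
      by_cases hq : q = z
      · left; rw [hq, etaF_z]
      · right; rw [etaF_ne _ _ _ hq]
    have : ∃ v : ℕ, k ≤ v ∧ v < n ∧ v ≠ i.val ∧ v ≠ j.val := by
      have hij' : i.val ≠ j.val := fun h => hij (Fin.ext h)
      by_cases h1 : k = i.val ∨ k = j.val
      · by_cases h2 : k + 1 = i.val ∨ k + 1 = j.val
        · exact ⟨k + 2, by omega, by omega, by omega, by omega⟩
        · exact ⟨k + 1, by omega, by omega, by omega, by omega⟩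
      · exact ⟨k, by omega, by omega, by omega, by omega⟩
    obtain ⟨v, hv1, hv2, hv3, hv4⟩ := this
    refine ⟨⟨v, hv2⟩, hv1, fun hmem => ?_⟩
    rcases hrange _ hmem with h | h
    · exact hv3 (congrArg Fin.val h)
    · exact hv4 (congrArg Fin.val h)
  · intro hinj
    have h2n : (2 : ℕ) < n := by omega
    have e1 : etaF z i j ⟨1, by omega⟩ = j := by
      apply etaF_ne; intro h; have := congrArg Fin.val h; simp [hz] at this
    have e2 : etaF z i j ⟨2, by omega⟩ = j := by
      apply etaF_ne; intro h; have := congrArg Fin.val h; simp [hz] at this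
    have := hinj (e1.trans e2.symm)
    have := congrArg Fin.val this
    simp at this

lemma rhoF_mem_Ukl (hk : 2 ≤ k) (hl : 3 ≤ l) (hn : k + l = n)
    {z : Fin n} (hz : z.val = 0) (s a : Fin n) :
    rhoF z s a ∈ Ukl n k := by
  have hkn : k < n := by omega
  have hval : ∀ (v : ℕ) (h : v < n), v ≠ a.val → rhoF z s a ⟨v, h⟩ = s := by
    intro v h hv
    apply if_neg
    intro hc; exact hv (congrArg Fin.val hc)
  refine mem_Ukl_of hk hkn ?_ ?_ ?_
  · -- collision: pick p ∈ {0,1} away from a, q ∈ {k, k+1} away from a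
    obtain ⟨p, hp1, hp2⟩ : ∃ p : ℕ, p < k ∧ p ≠ a.val := by
      by_cases h : a.val = 0
      · exact ⟨1, by omega, by omega⟩
      · exact ⟨0, by omega, by omega⟩
    obtain ⟨q, hq1, hq2, hq3⟩ : ∃ q : ℕ, k ≤ q ∧ q < n ∧ q ≠ a.val := by
      by_cases h : a.val = k
      · exact ⟨k + 1, by omega, by omega, by omega⟩
      · exact ⟨k, by omega, by omega, by omega⟩
    refine ⟨⟨p, by omega⟩, ⟨q, hq2⟩, by simpa using hp1, by simpa using hq1, ?_⟩
    rw [hval p _ hp2, hval q _ hq3]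
  · obtain ⟨v, hv1, hv2, hv3⟩ : ∃ v : ℕ, k ≤ v ∧ v < n ∧ v ≠ s.val := by
      by_cases h : s.val = k
      · exact ⟨k + 1, by omega, by omega, by omega⟩
      · exact ⟨k, by omega, by omega, by omega⟩
    refine ⟨⟨v, hv2⟩, hv1, fun hmem => ?_⟩
    obtain ⟨x, hx⟩ := hmem
    unfold rhoF at hx
    split at hx
    · have := congrArg Fin.val hx; simp [hz] at this; omega
    · exact hv3 (congrArg Fin.val hx).symm
  · intro hinj
    obtain ⟨p, q, hp, hq, hpq, hpa, hqa⟩ :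
        ∃ p q : ℕ, p < n ∧ q < n ∧ p ≠ q ∧ p ≠ a.val ∧ q ≠ a.val := by
      by_cases h0 : a.val = 0
      · exact ⟨1, 2, by omega, by omega, by omega, by omega, by omega⟩
      · by_cases h1 : a.val = 1
        · exact ⟨0, 2, by omega, by omega, by omega, by omega, by omega⟩
        · exact ⟨0, 1, by omega, by omega, by omega, by omega, by omega⟩
    have := hinj ((hval p hp hpa).trans (hval q hq hqa).symm)
    have := congrArg Fin.val this
    simp at this
    omega

/-- periodicity of `z` under `ρ ∘ f` for `ρ = rhoF z s a`. -/
lemma SFz_rhoF_comp {z s a : Fin n} (hs : s ≠ z) (f : Fin n → Fin n) :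
    SFz z (fun q => rhoF z s a (f q)) ↔ (f z = a ∨ f s = a) := by
  set ξ : Fin n → Fin n := fun q => rhoF z s a (f q) with hξ
  have happ : ∀ q, ξ q = if f q = a then z else s := fun q => rfl
  constructor
  · rintro ⟨m, hm, hzz⟩
    by_contra hc
    push_neg at hc
    obtain ⟨h1, h2⟩ := hc
    have hstep : ∀ t : ℕ, ξ^[t + 1] z = s := by
      intro t
      induction t with
      | zero => rw [Function.iterate_one, happ, if_neg h1]
      | succ t ih =>
          rw [Function.iterate_succ_apply', ih, happ, if_neg h2]
    obtain ⟨t, rfl⟩ : ∃ t, m = t + 1 := ⟨m - 1, by omega⟩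
    rw [hstep t] at hzz
    exact hs hzz
  · intro h
    by_cases h1 : f z = a
    · exact ⟨1, le_refl 1, by rw [Function.iterate_one, happ, if_pos h1]⟩
    · have h2 : f s = a := h.resolve_left h1
      refine ⟨2, by norm_num, ?_⟩
      show ξ (ξ z) = z
      rw [happ z, if_neg h1, happ s, if_pos h2]

/-- the distinguishing lemma: any two distinct maps which are not a swapped
`etaF` pair can be separated by some `rhoF`. -/
lemma distinguish {z : Fin n} {f g : Fin n → Fin n} (hfg : f ≠ g)
    (hnp : ∀ i j : Fin n, i ≠ j → f = etaF z i j → g ≠ etaF z j i) :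
    ∃ a s : Fin n, s ≠ z ∧ ¬((f z = a ∨ f s = a) ↔ (g z = a ∨ g s = a)) := by
  by_cases hzz : f z = g z
  · obtain ⟨q, hq⟩ := Function.ne_iff.mp hfg
    have hqz : q ≠ z := by rintro rfl; exact hq hzz
    by_cases hfq : f z = f q
    · refine ⟨g q, q, hqz, ?_⟩
      intro hiff
      have : g z = g q ∨ g q = g q := Or.inr rfl
      rcases hiff.mpr this with h | h
      · exact hq (hfq.symm.trans h)
      · exact hq h
    · refine ⟨f q, q, hqz, ?_⟩
      intro hiff
      rcases hiff.mp (Or.inr rfl) with h | h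
      · exact hfq (hzz.trans h)
      · exact hq h.symm
  · by_contra hc
    push_neg at hc
    have key : ∀ s : Fin n, s ≠ z → (f s = g z ∧ g s = f z) := by
      intro s hsz
      have h1 := (hc (g z) s hsz)
      have h2 := (hc (f z) s hsz)
      constructor
      · rcases h1.mpr (Or.inl rfl) with h | h
        · exact absurd h hzz
        · exact h
      · rcases h2.mp (Or.inl rfl) with h | h
        · exact absurd h.symm hzz
        · exact h
    have hf : f = etaF z (f z) (g z) := by
      funext q
      by_cases hq : q = z
      · rw [hq, etaF_z]
      · rw [etaF_ne _ _ _ hq, (key q hq).1]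
    have hg : g = etaF z (g z) (f z) := by
      funext q
      by_cases hq : q = z
      · rw [hq, etaF_z]
      · rw [etaF_ne _ _ _ hq, (key q hq).2]
    exact hnp (f z) (g z) hzz hf hg

end T311

namespace T311

variable {n : ℕ}

lemma mgen_id {X : Set (Fin n → Fin n)} : (id : Fin n → Fin n) ∈ MGen X :=
  ⟨[], by simp, rfl⟩

lemma foldr_comp_eq {l : List (Fin n → Fin n)} (c : Fin n → Fin n) :
    l.foldr (· ∘ ·) c = (l.foldr (· ∘ ·) id) ∘ c := by
  induction l with
  | nil => rfl
  | cons a l ih => simp [List.foldr_cons, ih, Function.comp_assoc]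

lemma mgen_comp {X : Set (Fin n → Fin n)} {f g : Fin n → Fin n}
    (hf : f ∈ MGen X) (hg : g ∈ MGen X) : f ∘ g ∈ MGen X := by
  obtain ⟨lf, hlf, rfl⟩ := hf
  obtain ⟨lg, hlg, rfl⟩ := hg
  refine ⟨lf ++ lg, fun x hx => ?_, ?_⟩
  · rcases List.mem_append.mp hx with h | h
    · exact hlf x h
    · exact hlg x h
  · rw [List.foldr_append]
    exact (foldr_comp_eq _).symm

lemma mgen_of_mem {X : Set (Fin n → Fin n)} {f : Fin n → Fin n} (hf : f ∈ X) :
    f ∈ MGen X :=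
  ⟨[f], by simpa using hf, rfl⟩

variable {A : Type}

/-- the transformation of the state set induced by the word `w`. -/
def dlt (M : DFA A (Fin n)) (w : List A) : Fin n → Fin n := fun q => M.evalFrom q w

lemma dlt_nil (M : DFA A (Fin n)) : dlt M [] = id := rfl

lemma dlt_cons (M : DFA A (Fin n)) (a : A) (w : List A) :
    dlt M (a :: w) = dlt M w ∘ (fun q => M.step q a) := rfl

lemma dlt_append (M : DFA A (Fin n)) (w u : List A) :
    dlt M (w ++ u) = dlt M u ∘ dlt M w := by
  funext q
  exact M.evalFrom_of_append q w u

lemma dlt_replicate (M : DFA A (Fin n)) (w : List A) (m : ℕ) (q : Fin n) :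
    M.evalFrom q (List.replicate m w).flatten = (dlt M w)^[m] q := by
  induction m generalizing q with
  | zero => rfl
  | succ m ih =>
      rw [List.replicate_succ, List.flatten_cons, M.evalFrom_of_append,
        Function.iterate_succ_apply]
      exact ih _

/-- counting:  `etaF z i j` with `j < i` are in bijection with `{(i,j) | j < i}`,
which has `n(n-1)/2` elements. -/
lemma card_lt_pairs :
    (Finset.univ.filter (fun p : Fin n × Fin n => p.2 < p.1)).card = n * (n - 1) / 2 := by
  rw [Finset.card_eq_sum_card_fiberwise
    (f := fun p : Fin n × Fin n => p.1) (t := Finset.univ) (fun x _ => Finset.mem_univ _)]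
  have hfib : ∀ i : Fin n,
      ((Finset.univ.filter (fun p : Fin n × Fin n => p.2 < p.1)).filter
        (fun p => p.1 = i)).card = i.val := by
    intro i
    rw [← Fin.card_Iio i]
    apply Finset.card_bij (fun p _ => p.2)
    · rintro ⟨a, b⟩ hp
      simp only [Finset.mem_filter, Finset.mem_univ, true_and] at hp
      simp [Finset.mem_Iio, hp.2 ▸ hp.1]
    · rintro ⟨a, b⟩ ha ⟨c, d⟩ hc h
      simp only [Finset.mem_filter, Finset.mem_univ, true_and] at ha hc
      simp only at h
      ext <;> simp [ha.2, hc.2, h]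
    · intro b hb
      simp only [Finset.mem_Iio] at hb
      exact ⟨(i, b), by simp [hb], rfl⟩
  rw [Finset.sum_congr rfl (fun i _ => hfib i)]
  rw [Fin.sum_univ_eq_sum_range (fun i => i) n]
  exact Finset.sum_range_id n

end T311

open T311 in
/-- **Theorem 3.11.** Let `k ≥ 2`, `l ≥ 3` be coprime with `k + l = n`, let `X` generate
a submonoid `M_n = MGen X` of `T_n` with `U_{k,l} ⊆ M_n`, and let the alphabet have at
least `|X|` letters.  Then the minimal DFA recognizing `root (L (A_{Σ,X}))` has exactly
`|M_n| - n(n-1)/2` states. -/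
theorem theorem_3_11 (n k l : ℕ) (hk : 2 ≤ k) (hl : 3 ≤ l)
    (hco : Nat.Coprime k l) (hn : k + l = n)
    (X : Set (Fin n → Fin n)) (hXfin : X.Finite) (hU : Ukl n k ⊆ MGen X)
    {A : Type} [Fintype A] (hcard : X.ncard ≤ Fintype.card A)
    (M : DFA A (Fin n)) (hM : IsCanonical X M) :
    sc (root M.accepts) + n * (n - 1) / 2 = (MGen X).ncard := by
  classical
  obtain ⟨hstart, haccept, Ψ, hstep, S, hbij, hSid⟩ := hM
  have npos : 0 < n := by omega
  set z : Fin n := ⟨0, npos⟩ with hzdef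
  have hz0 : z.val = 0 := rfl
  have hMstart : M.start = z := Fin.ext hstart
  set s₀ : Fin n := ⟨1, by omega⟩ with hs₀def
  have hs₀z : s₀ ≠ z := Fin.ne_of_val_ne (by norm_num)
  -- accept set characterization
  have haccmem : ∀ q : Fin n, q ∈ M.accept ↔ q = z := by
    intro q
    rw [haccept]
    show q.val = 0 ↔ q = z
    rw [Fin.ext_iff, hz0]
  -- letter actions lie in the generated monoid
  have hPsiMem : ∀ a : A, Ψ a ∈ MGen X := by
    intro a
    by_cases ha : a ∈ S
    · exact mgen_of_mem (hbij.mapsTo ha)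
    · rw [hSid a ha]; exact mgen_id
  have hdltMem : ∀ w : List A, dlt M w ∈ MGen X := by
    intro w
    induction w with
    | nil => rw [dlt_nil]; exact mgen_id
    | cons a w ih =>
        rw [dlt_cons]
        have hfa : (fun q => M.step q a) = Ψ a := funext (fun q => hstep a q)
        rw [hfa]
        exact mgen_comp ih (hPsiMem a)
  -- every element of the monoid is realized by a word
  have word_of : ∀ f ∈ MGen X, ∃ w : List A, dlt M w = f := by
    have hlist : ∀ lst : List (Fin n → Fin n), (∀ g ∈ lst, g ∈ X) →
        ∃ w : List A, dlt M w = lst.foldr (· ∘ ·) id := by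
      intro lst
      induction lst with
      | nil => exact fun _ => ⟨[], rfl⟩
      | cons g lst ih =>
          intro hmem
          obtain ⟨w, hw⟩ := ih (fun x hx => hmem x (List.mem_cons_of_mem _ hx))
          obtain ⟨a, haS, ha⟩ := hbij.surjOn (hmem g List.mem_cons_self)
          refine ⟨w ++ [a], ?_⟩
          rw [dlt_append, List.foldr_cons, hw]
          have hda : dlt M [a] = Ψ a := funext (fun q => hstep a q)
          rw [hda, ha]
    rintro f ⟨lst, hlst, rfl⟩
    exact hlist lst hlst
  -- characterization of root(L)
  have hev : ∀ (w : List A) (m : ℕ),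
      M.eval (List.replicate m w).flatten = (dlt M w)^[m] z := by
    intro w m
    show M.evalFrom M.start _ = _
    rw [hMstart]
    exact dlt_replicate M w m z
  have hroot : ∀ w : List A, w ∈ root M.accepts ↔ SFz z (dlt M w) := by
    intro w
    show (∃ m, 1 ≤ m ∧ (List.replicate m w).flatten ∈ M.accepts) ↔ _
    unfold SFz
    refine exists_congr fun m => and_congr_right fun _ => ?_
    rw [DFA.mem_accepts, hev w m, haccmem]
  -- canonicalization facts
  have hq2a : (⟨2, by omega⟩ : Fin n) ≠ z := Fin.ne_of_val_ne (by norm_num)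
  have hq2b : (⟨2, by omega⟩ : Fin n) ≠ s₀ := Fin.ne_of_val_ne (by norm_num)
  have hcanid : canonF z s₀ (id : Fin n → Fin n) = id := canonF_id hq2a hq2b
  have hcanmem : ∀ f ∈ MGen X, canonF z s₀ f ∈ MGen X := by
    intro f hf
    rcases canonF_spec z s₀ f with h | ⟨i, j, hlt, hfe, hc⟩
    · rw [h]; exact hf
    · rw [hc]
      exact hU (etaF_mem_Ukl hk hl hn hz0 (ne_of_lt hlt))
  -- the quotient-like DFA on canonical representatives
  let σ := {f : Fin n → Fin n // f ∈ MGen X ∧ canonF z s₀ f = f}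
  haveI : Fintype σ := Fintype.ofFinite σ
  let N : DFA A σ :=
    { step := fun f a => ⟨canonF z s₀ (Ψ a ∘ f.1),
        hcanmem _ (mgen_comp (hPsiMem a) f.2.1), canonF_idem hs₀z _⟩,
      start := ⟨id, mgen_id, hcanid⟩,
      accept := {f | SFz z f.1} }
  have key : ∀ (w : List A) (f : Fin n → Fin n) (h1 : f ∈ MGen X)
      (h2 : canonF z s₀ f = f),
      (N.evalFrom ⟨f, h1, h2⟩ w).1 = canonF z s₀ (dlt M w ∘ f) := by
    intro w
    induction w with
    | nil =>
        intro f h1 h2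
        show f = canonF z s₀ (dlt M [] ∘ f)
        rw [dlt_nil, Function.id_comp, h2]
    | cons a w ih =>
        intro f h1 h2
        have h3 := ih (canonF z s₀ (Ψ a ∘ f))
          (hcanmem _ (mgen_comp (hPsiMem a) h1)) (canonF_idem hs₀z _)
        have harr : dlt M w ∘ (Ψ a ∘ f) = dlt M (a :: w) ∘ f := by
          funext q
          show dlt M w (Ψ a (f q)) = dlt M w (M.step (f q) a)
          rw [hstep]
        calc (N.evalFrom ⟨f, h1, h2⟩ (a :: w)).1
            = canonF z s₀ (dlt M w ∘ canonF z s₀ (Ψ a ∘ f)) := h3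
          _ = canonF z s₀ (dlt M w ∘ (Ψ a ∘ f)) := canonF_comp_congr hs₀z _ _
          _ = canonF z s₀ (dlt M (a :: w) ∘ f) := by rw [harr]
  have hNacc : N.accepts = root M.accepts := by
    ext w
    rw [DFA.mem_accepts, hroot w]
    show SFz z ((N.evalFrom ⟨id, mgen_id, hcanid⟩ w).1) ↔ _
    rw [key w id mgen_id hcanid, Function.comp_id]
    exact SFz_canonF _
  -- counting
  have hTfin : (MGen X).Finite := Set.toFinite _
  set Ft := hTfin.toFinset with hFt
  have hcardσ : Fintype.card σ = (Ft.filter (fun f => canonF z s₀ f = f)).card := by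
    apply Fintype.card_of_subtype
    intro f
    rw [Finset.mem_filter, Set.Finite.mem_toFinset]
  have hbad : (Ft.filter (fun f => ¬ canonF z s₀ f = f)).card = n * (n - 1) / 2 := by
    rw [← card_lt_pairs (n := n)]
    symm
    apply Finset.card_bij (fun (p : Fin n × Fin n) _ => etaF z p.1 p.2)
    · rintro ⟨i, j⟩ hp
      simp only [Finset.mem_filter, Finset.mem_univ, true_and] at hp
      refine Finset.mem_filter.mpr ⟨hTfin.mem_toFinset.mpr
        (hU (etaF_mem_Ukl hk hl hn hz0 (ne_of_lt hp).symm)), ?_⟩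
      exact (canonF_ne_iff hs₀z _).mpr ⟨i, j, hp, rfl⟩
    · rintro ⟨i, j⟩ hi ⟨i', j'⟩ hi' h
      obtain ⟨h1, h2⟩ := etaF_inj hs₀z h
      exact Prod.ext_iff.mpr ⟨h1, h2⟩
    · intro f hf
      rw [Finset.mem_filter] at hf
      obtain ⟨i, j, hlt, rfl⟩ := (canonF_ne_iff hs₀z _).mp hf.2
      exact ⟨(i, j), by simp [hlt], rfl⟩
  have hcount : Fintype.card σ + n * (n - 1) / 2 = (MGen X).ncard := by
    rw [Set.ncard_eq_toFinset_card _ hTfin, hcardσ, ← hbad, ← hFt]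
    exact Finset.card_filter_add_card_filter_not _
  -- lower bound: any DFA accepting root(L) has at least card σ states
  have hlower : ∀ (τ : Type) (ft : Fintype τ) (N' : DFA A τ),
      N'.accepts = root M.accepts → Fintype.card σ ≤ Fintype.card τ := by
    intro τ ft N' hacc
    have hword : ∀ f : σ, ∃ w : List A, dlt M w = f.1 := fun f => word_of f.1 f.2.1
    choose wd hwd using hword
    refine Fintype.card_le_of_injective (fun f => N'.eval (wd f)) ?_
    intro f g hEq
    by_contra hne
    have hfg : f.1 ≠ g.1 := fun h => hne (Subtype.ext h)
    have hnp : ∀ i j : Fin n, i ≠ j → f.1 = etaF z i j → g.1 ≠ etaF z j i := by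
      intro i j hij hf hg
      have h1 : ¬ j < i := canonF_eq_self_of_etaF hs₀z (hf ▸ f.2.2) hij
      have h2 : ¬ i < j := canonF_eq_self_of_etaF hs₀z (hg ▸ g.2.2) (Ne.symm hij)
      exact hij (le_antisymm (not_lt.mp h1) (not_lt.mp h2))
    obtain ⟨a, s, hsz, hsep⟩ := distinguish hfg hnp
    obtain ⟨u, hu⟩ := word_of _ (hU (rhoF_mem_Ukl hk hl hn hz0 s a))
    have hmem : ∀ h : σ, (wd h ++ u ∈ root M.accepts) ↔ (h.1 z = a ∨ h.1 s = a) := by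
      intro h
      rw [hroot, dlt_append, hu, hwd]
      exact SFz_rhoF_comp hsz h.1
    have hsame : (wd f ++ u ∈ root M.accepts) ↔ (wd g ++ u ∈ root M.accepts) := by
      rw [← hacc, DFA.mem_accepts, DFA.mem_accepts]
      have hEq' : N'.evalFrom N'.start (wd f) = N'.evalFrom N'.start (wd g) := hEq
      show N'.evalFrom N'.start _ ∈ _ ↔ N'.evalFrom N'.start _ ∈ _
      rw [N'.evalFrom_of_append, N'.evalFrom_of_append, hEq']
    exact hsep (((hmem f).symm.trans hsame).trans (hmem g))
  -- conclude
  have hmemSS : Fintype.card σ ∈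
      {m | ∃ (σ' : Type) (_ : Fintype σ') (M' : DFA A σ'),
        M'.accepts = root M.accepts ∧ Fintype.card σ' = m} :=
    ⟨σ, inferInstance, N, hNacc, rfl⟩
  have hsc : sc (root M.accepts) = Fintype.card σ := by
    refine le_antisymm (Nat.sInf_le hmemSS) (le_csInf ⟨_, hmemSS⟩ ?_)
    rintro m ⟨τ, ft, N', hacc, rfl⟩
    exact hlower τ ft N' hacc
  rw [hsc]
  exact hcount
end

section
/- Let Y ⊆ T_n generate the submonoid M_n, and let 𝓜 = (Z_n, Σ, δ, z₀, F) be a DFA based on Y with z₀ ∈ F. Let η, θ ∈ M_n with η ≠ θ and rank(η) = 2. If η(z₀) is unique in the image of η and θ = η̄ (the complement of η), then η and θ are equivalent states in 𝓜*. -/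
/-!
Write `z₀` for the start state. Since `η z₀` is unique in the image of the rank-2 map `η`,
`η` sends `z₀` to `p := η z₀` and every other state to a single `r ≠ p`, and its complement
`θ` swaps the two values. After reading a word `w` from `η`, resp. `θ`, the state of `𝓜*` is
a map sending `z₀` to `a := δ_w p`, resp. `b := δ_w r`, and everything else to the other of
the two. For such a map `f` every value is `a` or `b`, `f z₀ = a`, and `f^2 z₀ = b` unless
`a = z₀`; as `z₀` is final, some positive iterate of `f` sends `z₀` into `F` iff `a ∈ F` or
`b ∈ F`. This condition is symmetric in `a` and `b`.
-/

lemma exists_iterate_mem_iff_of_apply_eq {α : Type*} {f : α → α} {z a b : α} {P : Set α}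
    (hz : z ∈ P) (hfz : f z = a) (hf : ∀ q, q ≠ z → f q = b) :
    (∃ m, 1 ≤ m ∧ f^[m] z ∈ P) ↔ a ∈ P ∨ b ∈ P := by
  have hval : ∀ q, f q = a ∨ f q = b := fun q => by
    by_cases hq : q = z
    · exact .inl (hq ▸ hfz)
    · exact .inr (hf q hq)
  constructor
  · rintro ⟨_ | m, hm1, hm⟩
    · omega
    rw [Function.iterate_succ_apply'] at hm
    rcases hval (f^[m] z) with h | h <;> rw [h] at hm
    exacts [.inl hm, .inr hm]
  · rintro (ha | hb)
    · exact ⟨1, le_rfl, by simpa [hfz] using ha⟩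
    · by_cases haz : a = z
      · exact ⟨1, le_rfl, by simpa [hfz, haz] using hz⟩
      · exact ⟨2, by norm_num, by simpa [hfz, hf a haz] using hb⟩

lemma exists_apply_eq_of_rank_eq_two {n : ℕ} {η : Fin n → Fin n} {z : Fin n}
    (hrank : rank η = 2) (huniq : UniqueInImage η (η z)) :
    ∃ y, η y ≠ η z ∧ ∀ q, q ≠ z → η q = η y := by
  classical
  have hz : η z ∈ Finset.image η Finset.univ := Finset.mem_image_of_mem η (Finset.mem_univ z)
  obtain ⟨c, hc⟩ : ∃ c, (Finset.image η Finset.univ).erase (η z) = {c} := by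
    rw [← Finset.card_eq_one, Finset.card_erase_of_mem hz, ← rank, hrank]
  have hηc : ∀ q, q ≠ z → η q = c := fun q hq => by
    have hmem : η q ∈ (Finset.image η Finset.univ).erase (η z) :=
      Finset.mem_erase.mpr
        ⟨fun h => hq (huniq q z h rfl), Finset.mem_image_of_mem η (Finset.mem_univ q)⟩
    rw [hc] at hmem
    exact Finset.mem_singleton.mp hmem
  have hc_mem : c ∈ (Finset.image η Finset.univ).erase (η z) :=
    hc ▸ Finset.mem_singleton_self c
  obtain ⟨y, -, rfl⟩ := Finset.mem_image.mp (Finset.mem_of_mem_erase hc_mem)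
  exact ⟨y, Finset.ne_of_mem_erase hc_mem, hηc⟩

theorem lemma_3_13_general (n : ℕ) {A : Type} (M : DFA A (Fin n))
    (hstart : M.start ∈ M.accept)
    (η θ : Fin n → Fin n)
    (hrank : rank η = 2) (huniq : UniqueInImage η (η M.start))
    (hcompl : IsCompl2 η θ) :
    StarEquiv M η θ := by
  intro w
  obtain ⟨y, hy, hηy⟩ := exists_apply_eq_of_rank_eq_two hrank huniq
  have hθz : θ M.start = η y := hcompl _ _ hy.symm
  have hθ : ∀ q, q ≠ M.start → θ q = η M.start :=
    fun q hq => hcompl _ _ (by rw [hηy q hq]; exact hy)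
  unfold StarFinal
  rw [exists_iterate_mem_iff_of_apply_eq hstart rfl
      (fun q hq => congrArg (M.evalFrom · w) (hηy q hq)),
    exists_iterate_mem_iff_of_apply_eq hstart (congrArg (M.evalFrom · w) hθz)
      (fun q hq => congrArg (M.evalFrom · w) (hθ q hq)), or_comm]

/-- **Lemma 3.13.** Let `Y` generate `M_n`, and let `𝓜` be a DFA based on `Y` whose
start state is final.  If `η ≠ θ` lie in `M_n`, `rank η = 2`, `η z₀` is unique in the
image of `η`, and `θ` is the complement of `η`, then `η` and `θ` are equivalent states
of `𝓜*`. -/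
theorem lemma_3_13 (n : ℕ) (Y : Set (Fin n → Fin n)) {A : Type} (M : DFA A (Fin n))
    (hbased : IsBasedOn Y M) (hstart : M.start ∈ M.accept)
    (η θ : Fin n → Fin n) (hη : η ∈ MGen Y) (hθ : θ ∈ MGen Y) (hne : η ≠ θ)
    (hrank : rank η = 2) (huniq : UniqueInImage η (η M.start))
    (hcompl : IsCompl2 η θ) :
    StarEquiv M η θ :=
  lemma_3_13_general n M hstart η θ hrank huniq hcompl
end

section
/- Let k ≥ 2 and l ≥ 3 be coprime integers with k + l = n, let X_n ⊆ T_n generate a submonoid M_n with U_{k,l} ⊆ M_n, and let Σ be an alphabet with |Σ| ≥ |X_n|. Let η, θ ∈ M_n with η ≠ θ. If rank(η) = 1, then η and θ are not equivalent states in A*_{Σ,X_n}. -/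
private lemma twoCycle_surjective (n k : ℕ) (hk1 : 1 ≤ k) (hkn : k < n) :
    Function.Surjective (twoCycle n k) := by
  intro y
  by_cases h0 : y.val = 0
  · refine ⟨⟨k - 1, by omega⟩, Fin.ext ?_⟩
    show (if k - 1 + 1 = k then 0 else if k - 1 + 1 = n then k else k - 1 + 1) % n = y.val
    rw [if_pos (by omega)]
    simp [h0]
  · by_cases hk' : y.val = k
    · refine ⟨⟨n - 1, by omega⟩, Fin.ext ?_⟩
      show (if n - 1 + 1 = k then 0 else if n - 1 + 1 = n then k else n - 1 + 1) % n = y.val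
      rw [if_neg (by omega), if_pos (by omega), Nat.mod_eq_of_lt hkn, hk']
    · have hy : y.val < n := y.isLt
      refine ⟨⟨y.val - 1, by omega⟩, Fin.ext ?_⟩
      show (if y.val - 1 + 1 = k then 0 else if y.val - 1 + 1 = n then k
        else y.val - 1 + 1) % n = y.val
      rw [if_neg (by omega), if_neg (by omega)]
      have h1 : y.val - 1 + 1 = y.val := by omega
      rw [h1, Nat.mod_eq_of_lt hy]

private lemma pmap_mem_Ukl (n k l : ℕ) (hk : 2 ≤ k) (hl : 3 ≤ l) (hn : k + l = n)
    (a u v : Fin n) :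
    (fun x : Fin n => if x = a then u else v) ∈ Ukl n k := by
  have hn5 : 5 ≤ n := by omega
  have hrange : ∀ x : Fin n,
      (if x = a then u else v) = u ∨ (if x = a then u else v) = v := by
    intro x; by_cases h : x = a
    · rw [if_pos h]; exact Or.inl rfl
    · rw [if_neg h]; exact Or.inr rfl
  have hmiss : ∀ p q : Fin n, ∃ m : Fin n, k ≤ m.val ∧ m ≠ p ∧ m ≠ q := by
    intro p q
    have hex : ∃ mv : ℕ, k ≤ mv ∧ mv < n ∧ mv ≠ p.val ∧ mv ≠ q.val := by
      by_cases h0 : k ≠ p.val ∧ k ≠ q.val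
      · exact ⟨k, le_refl _, by omega, h0.1, h0.2⟩
      · by_cases h1 : k + 1 ≠ p.val ∧ k + 1 ≠ q.val
        · exact ⟨k + 1, by omega, by omega, h1.1, h1.2⟩
        · push_neg at h0 h1
          exact ⟨k + 2, by omega, by omega, by omega, by omega⟩
    obtain ⟨mv, h1, h2, h3, h4⟩ := hex
    exact ⟨⟨mv, h2⟩, h1, fun h => h3 (congrArg Fin.val h),
      fun h => h4 (congrArg Fin.val h)⟩
  simp only [Ukl, Set.mem_setOf_eq, Xor']
  refine Or.inr ⟨⟨?_, ?_⟩, ?_⟩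
  · obtain ⟨i, hik, hia⟩ : ∃ i : Fin n, i.val < k ∧ i ≠ a := by
      by_cases h : a.val = 0
      · exact ⟨⟨1, by omega⟩, show (1:ℕ) < k by omega,
          Fin.ne_of_val_ne (show (1:ℕ) ≠ a.val by omega)⟩
      · exact ⟨⟨0, by omega⟩, show (0:ℕ) < k by omega,
          Fin.ne_of_val_ne (show (0:ℕ) ≠ a.val by omega)⟩
    obtain ⟨j, hjk, hja⟩ : ∃ j : Fin n, k ≤ j.val ∧ j ≠ a := by
      by_cases h : a.val = k
      · exact ⟨⟨k + 1, by omega⟩, show k ≤ k + 1 by omega,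
          Fin.ne_of_val_ne (show k + 1 ≠ a.val by omega)⟩
      · exact ⟨⟨k, by omega⟩, show k ≤ k by omega,
          Fin.ne_of_val_ne (show k ≠ a.val by omega)⟩
    exact ⟨i, j, hik, hjk, by rw [if_neg hia, if_neg hja]⟩
  · obtain ⟨m, hm1, hm2, hm3⟩ := hmiss u v
    refine ⟨m, hm1, ?_⟩
    rintro ⟨x, hx⟩
    have hx' : (if x = a then u else v) = m := hx
    rcases hrange x with h | h
    · exact hm2 (hx'.symm.trans h)
    · exact hm3 (hx'.symm.trans h)
  · rintro ⟨m, hm1, hm2⟩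
    have hs : Function.Surjective ((twoCycle n k)^[m]) :=
      (twoCycle_surjective n k (by omega) (by omega)).iterate m
    obtain ⟨zz, _, hz2, hz3⟩ := hmiss u v
    obtain ⟨x, hx⟩ := hs zz
    rw [← hm2] at hx
    have hx' : (if x = a then u else v) = zz := hx
    rcases hrange x with h | h
    · exact hz2 (hx'.symm.trans h)
    · exact hz3 (hx'.symm.trans h)

private lemma iterate_const {β : Type*} (e : β) (m : ℕ) (hm : 1 ≤ m) (x : β) :
    (fun _ => e)^[m] x = e := by
  cases m with
  | zero => omega
  | succ j => rw [Function.iterate_succ_apply']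

/-- **Lemma 3.15.** In the setting of the construction `A_{Σ,X_n}` (with
`U_{k,l} ⊆ M_n` for coprime `k ≥ 2`, `l ≥ 3`, `k + l = n`): if `η ≠ θ` lie in `M_n`
and `rank η = 1`, then `η` and `θ` are not equivalent states of `A*_{Σ,X_n}`. -/
theorem lemma_3_15 (n k l : ℕ) (hk : 2 ≤ k) (hl : 3 ≤ l)
    (hco : Nat.Coprime k l) (hn : k + l = n)
    (X : Set (Fin n → Fin n)) (hXfin : X.Finite) (hU : Ukl n k ⊆ MGen X)
    {A : Type} [Fintype A] (hcard : X.ncard ≤ Fintype.card A)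
    (M : DFA A (Fin n)) (hM : IsCanonical X M)
    (η θ : Fin n → Fin n) (hη : η ∈ MGen X) (hθ : θ ∈ MGen X) (hne : η ≠ θ)
    (hrank : rank η = 1) :
    ¬ StarEquiv M η θ := by
  have hn5 : 5 ≤ n := by omega
  obtain ⟨hstart, haccept, Ψ, hstep, S, hbij, hout⟩ := hM
  have hsurjX : ∀ g ∈ X, ∃ b, Ψ b = g := by
    intro g hg
    obtain ⟨b, -, hb⟩ := hbij.surjOn hg
    exact ⟨b, hb⟩
  have hreal : ∀ (L : List (Fin n → Fin n)), (∀ g ∈ L, g ∈ X) →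
      ∃ w : List A, ∀ q, M.evalFrom q w = L.foldr (· ∘ ·) id q := by
    intro L
    induction L with
    | nil => exact fun _ => ⟨[], fun q => rfl⟩
    | cons g L ih =>
      intro hL
      obtain ⟨w, hw⟩ := ih fun g' hg' => hL g' (List.mem_cons_of_mem _ hg')
      obtain ⟨b, hb⟩ := hsurjX g (hL g List.mem_cons_self)
      refine ⟨w ++ [b], fun q => ?_⟩
      rw [DFA.evalFrom_append_singleton, hw, hstep, hb]
      rfl
  have hrealM : ∀ ρ, ρ ∈ MGen X → ∃ w : List A, ∀ q, M.evalFrom q w = ρ q := by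
    rintro ρ ⟨L, hL, rfl⟩
    exact hreal L hL
  have hacc_iff : ∀ q : Fin n, q ∈ M.accept ↔ q.val = 0 := fun q => by
    rw [haccept]; exact Iff.rfl
  obtain ⟨z, hz⟩ : ∃ z : Fin n, z.val = 0 := ⟨⟨0, by omega⟩, rfl⟩
  obtain ⟨o, ho⟩ : ∃ o : Fin n, o.val = 1 := ⟨⟨1, by omega⟩, rfl⟩
  unfold rank at hrank
  obtain ⟨c, hcim⟩ := Finset.card_eq_one.mp hrank
  have hc : ∀ q, η q = c := fun q => by
    have h1 : η q ∈ Finset.image η Finset.univ :=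
      Finset.mem_image_of_mem _ (Finset.mem_univ q)
    rw [hcim] at h1
    exact Finset.mem_singleton.mp h1
  intro hEq
  by_cases hθ0 : θ M.start = c
  · -- θ agrees with η at the start state
    obtain ⟨t, ht⟩ := Function.ne_iff.mp hne
    have hct : c ≠ θ t := by rw [← hc t]; exact ht
    obtain ⟨w, hw⟩ := hrealM (fun x => if x = θ t then z else t)
      (hU (pmap_mem_Ukl n k l hk hl hn (θ t) z t))
    have hwc : ∀ q, M.evalFrom q w = if q = θ t then z else t := fun q => hw q
    have hθfin : StarFinal M fun q => M.evalFrom (θ q) w := by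
      refine ⟨2, by omega, ?_⟩
      have h2 : (fun q => M.evalFrom (θ q) w)^[2] M.start
          = M.evalFrom (θ (M.evalFrom (θ M.start) w)) w := rfl
      rw [h2, hwc (θ M.start), hθ0, if_neg hct, hwc (θ t), if_pos rfl]
      exact (hacc_iff z).mpr hz
    obtain ⟨m, hm, hacc⟩ := (hEq w).mpr hθfin
    have hfun : (fun q => M.evalFrom (η q) w) = fun _ => t := by
      funext q
      rw [hwc (η q), hc q, if_neg hct]
    rw [hfun, iterate_const t m hm] at hacc
    have ht0 : t.val = 0 := (hacc_iff t).mp hacc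
    have hts : t = M.start := Fin.ext (by omega)
    have htm : θ t = c := by rw [hts, hθ0]
    exact hct htm.symm
  · -- θ differs from η at the start state
    obtain ⟨w, hw⟩ := hrealM (fun x => if x = θ M.start then z else o)
      (hU (pmap_mem_Ukl n k l hk hl hn (θ M.start) z o))
    have hwc : ∀ q, M.evalFrom q w = if q = θ M.start then z else o := fun q => hw q
    have hθfin : StarFinal M fun q => M.evalFrom (θ q) w := by
      refine ⟨1, le_refl 1, ?_⟩
      have h1 : (fun q => M.evalFrom (θ q) w)^[1] M.start
          = M.evalFrom (θ M.start) w := rfl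
      rw [h1, hwc, if_pos rfl]
      exact (hacc_iff z).mpr hz
    obtain ⟨m, hm, hacc⟩ := (hEq w).mpr hθfin
    have hfun : (fun q => M.evalFrom (η q) w) = fun _ => o := by
      funext q
      rw [hwc (η q), hc q, if_neg (fun h => hθ0 h.symm)]
    rw [hfun, iterate_const o m hm] at hacc
    have := (hacc_iff o).mp hacc
    omega
end

section
/- Let k ≥ 2 and l ≥ 3 be coprime integers with k + l = n, let X_n ⊆ T_n generate a submonoid M_n with U_{k,l} ⊆ M_n, and let Σ be an alphabet with |Σ| ≥ |X_n|. Let η, θ ∈ M_n with η ≠ θ and rank(η) = 2. Then η and θ are equivalent states in A*_{Σ,X_n} if and only if η(1) is unique in the image of η and θ = η̄ (the complement of η). -/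
lemma twoCycle_surj {n k : ℕ} (hk : 0 < k) (hkn : k < n) :
    Function.Surjective (twoCycle n k) := by
  intro y
  have hy := y.isLt
  by_cases h0 : y.val = 0
  · refine ⟨⟨k - 1, by omega⟩, Fin.ext ?_⟩
    show (if k - 1 + 1 = k then 0 else if k - 1 + 1 = n then k else k - 1 + 1) % n = y.val
    rw [if_pos (by omega), h0]
    exact Nat.zero_mod n
  · by_cases hky : y.val = k
    · refine ⟨⟨n - 1, by omega⟩, Fin.ext ?_⟩
      show (if n - 1 + 1 = k then 0 else if n - 1 + 1 = n then k else n - 1 + 1) % n = y.val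
      rw [if_neg (by omega), if_pos (by omega), hky, Nat.mod_eq_of_lt hkn]
    · refine ⟨⟨y.val - 1, by omega⟩, Fin.ext ?_⟩
      show (if y.val - 1 + 1 = k then 0 else if y.val - 1 + 1 = n then k else y.val - 1 + 1) % n
        = y.val
      rw [if_neg (by omega), if_neg (by omega), Nat.mod_eq_of_lt (by omega)]
      omega

/-- **Lemma 3.16.** In the setting of the construction `A_{Σ,X_n}` (with
`U_{k,l} ⊆ M_n` for coprime `k ≥ 2`, `l ≥ 3`, `k + l = n`): if `η ≠ θ` lie in `M_n`
and `rank η = 2`, then `η` and `θ` are equivalent states of `A*_{Σ,X_n}` iff `η 1` is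
unique in the image of `η` and `θ` is the complement of `η`. -/
theorem lemma_3_16 (n k l : ℕ) (hk : 2 ≤ k) (hl : 3 ≤ l)
    (hco : Nat.Coprime k l) (hn : k + l = n)
    (X : Set (Fin n → Fin n)) (hXfin : X.Finite) (hU : Ukl n k ⊆ MGen X)
    {A : Type} [Fintype A] (hcard : X.ncard ≤ Fintype.card A)
    (M : DFA A (Fin n)) (hM : IsCanonical X M)
    (η θ : Fin n → Fin n) (hη : η ∈ MGen X) (hθ : θ ∈ MGen X) (hne : η ≠ θ)
    (hrank : rank η = 2) :
    StarEquiv M η θ ↔ (UniqueInImage η (η M.start) ∧ IsCompl2 η θ) := by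
  obtain ⟨hstart, haccept, Ψ, hstep, S, hbij, hid⟩ := hM
  set s := M.start with hsdef
  have realize : ∀ f ∈ MGen X, ∃ w : List A, ∀ q : Fin n, M.evalFrom q w = f q := by
    rintro f ⟨L, hL, rfl⟩
    induction L with
    | nil => exact ⟨[], fun q => rfl⟩
    | cons g L ih =>
      obtain ⟨w, hw⟩ := ih (fun g' hg' => hL g' (List.mem_cons_of_mem _ hg'))
      obtain ⟨aa, -, ha⟩ := hbij.surjOn (hL g List.mem_cons_self)
      refine ⟨w ++ [aa], fun q => ?_⟩
      have h1 : M.evalFrom q (w ++ [aa]) = M.step (M.evalFrom q w) aa := by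
        simp [DFA.evalFrom, List.foldl_append]
      rw [h1, hstep, hw q, ha]
      rfl
  have GU : ∀ (x c : Fin n), c ≠ s →
      (fun z : Fin n => if z = x then s else c) ∈ Ukl n k := by
    intro x c hc
    have hB : (∃ i j : Fin n, i.val < k ∧ k ≤ j.val ∧
          (if i = x then s else c) = (if j = x then s else c)) ∧
        ∃ m : Fin n, k ≤ m.val ∧ m ∉ Set.range (fun z : Fin n => if z = x then s else c) := by
      constructor
      · obtain ⟨i, hik, hix⟩ : ∃ i : Fin n, i.val < k ∧ i ≠ x := by
          by_cases hx : (⟨0, by omega⟩ : Fin n) = x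
          · refine ⟨⟨1, by omega⟩, by show 1 < k; omega, ?_⟩
            rw [← hx]
            intro h
            have := congrArg Fin.val h
            simp at this
          · exact ⟨⟨0, by omega⟩, by show 0 < k; omega, hx⟩
        obtain ⟨j, hjk, hjx⟩ : ∃ j : Fin n, k ≤ j.val ∧ j ≠ x := by
          by_cases hx : (⟨k, by omega⟩ : Fin n) = x
          · refine ⟨⟨k + 1, by omega⟩, by show k ≤ k + 1; omega, ?_⟩
            rw [← hx]
            intro h
            have := congrArg Fin.val h
            simp at this
          · exact ⟨⟨k, by omega⟩, by show k ≤ k; omega, hx⟩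
        exact ⟨i, j, hik, hjk, by rw [if_neg hix, if_neg hjx]⟩
      · obtain ⟨mp, hmk, hmc⟩ : ∃ mp : Fin n, k ≤ mp.val ∧ mp ≠ c := by
          by_cases hx : (⟨k, by omega⟩ : Fin n) = c
          · refine ⟨⟨k + 1, by omega⟩, by show k ≤ k + 1; omega, ?_⟩
            rw [← hx]
            intro h
            have := congrArg Fin.val h
            simp at this
          · exact ⟨⟨k, by omega⟩, by show k ≤ k; omega, hx⟩
        refine ⟨mp, hmk, ?_⟩
        rintro ⟨z, hz⟩
        have hz' : (if z = x then s else c) = mp := hz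
        by_cases hzx : z = x
        · rw [if_pos hzx] at hz'
          have hv := congrArg Fin.val hz'
          rw [hstart] at hv
          omega
        · rw [if_neg hzx] at hz'
          exact hmc hz'.symm
    refine Or.inr ⟨hB, ?_⟩
    rintro ⟨m, hm, hG⟩
    obtain ⟨mp, hmk, hmp⟩ := hB.2
    obtain ⟨z, hz⟩ := (twoCycle_surj (n := n) (k := k) (by omega) (by omega)).iterate m mp
    exact hmp ⟨z, by rw [hG]; exact hz⟩
  have SF' : ∀ ρ : Fin n → Fin n, StarFinal M ρ ↔ ∃ m, 1 ≤ m ∧ ρ^[m] s = s := by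
    intro ρ
    constructor
    · rintro ⟨m, hm, h⟩
      rw [haccept, Set.mem_setOf_eq] at h
      exact ⟨m, hm, Fin.ext (by rw [h, hstart])⟩
    · rintro ⟨m, hm, h⟩
      refine ⟨m, hm, ?_⟩
      rw [haccept, Set.mem_setOf_eq, h]
      exact hstart
  have char : ∀ (x c : Fin n), c ≠ s → ∀ φ : Fin n → Fin n,
      (StarFinal M (fun q => if φ q = x then s else c) ↔ (φ s = x ∨ φ c = x)) := by
    intro x c hc φ
    rw [SF']
    constructor
    · rintro ⟨m, hm, h⟩
      by_contra hcon
      push_neg at hcon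
      have key : ∀ m', (fun q => if φ q = x then s else c)^[m' + 1] s = c := by
        intro m'
        induction m' with
        | zero => exact if_neg hcon.1
        | succ m'' ih =>
          rw [Function.iterate_succ_apply', ih]
          exact if_neg hcon.2
      obtain ⟨m', rfl⟩ : ∃ m', m = m' + 1 := ⟨m - 1, by omega⟩
      rw [key m'] at h
      exact hc h
    · rintro (h | h)
      · exact ⟨1, le_refl 1, if_pos h⟩
      · by_cases h1 : φ s = x
        · exact ⟨1, le_refl 1, if_pos h1⟩
        · refine ⟨2, by omega, ?_⟩
          show (if φ (if φ s = x then s else c) = x then s else c) = s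
          rw [if_neg h1]
          exact if_pos h
  constructor
  · intro hSE
    have MT1 : ∀ (x c : Fin n), c ≠ s → ((η s = x ∨ η c = x) ↔ (θ s = x ∨ θ c = x)) := by
      intro x c hc
      obtain ⟨w, hw⟩ := realize _ (hU (GU x c hc))
      have h1 : (fun q => M.evalFrom (η q) w) = fun q => if η q = x then s else c :=
        funext fun q => hw (η q)
      have h2 : (fun q => M.evalFrom (θ q) w) = fun q => if θ q = x then s else c :=
        funext fun q => hw (θ q)
      have h3 := hSE w
      rw [h1, h2, char x c hc η, char x c hc θ] at h3
      exact h3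
    have hta : θ s ≠ η s := by
      intro hts
      apply hne
      funext z
      by_cases hz : z = s
      · rw [hz, ← hts]
      · have e1 := (MT1 (η z) z hz).mp (Or.inr rfl)
        have e2 := (MT1 (θ z) z hz).mpr (Or.inr rfl)
        rcases e2 with e2 | e2
        · rcases e1 with e1 | e1
          · rw [← e2, ← e1, hts]
          · exact e1.symm
        · exact e2
    have h2 : ∀ c, c ≠ s → η c = θ s := by
      intro c hc
      rcases (MT1 (θ s) c hc).mpr (Or.inl rfl) with h | h
      · exact absurd h.symm hta
      · exact h
    have h3 : ∀ c, c ≠ s → θ c = η s := by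
      intro c hc
      rcases (MT1 (η s) c hc).mp (Or.inl rfl) with h | h
      · exact absurd h hta
      · exact h
    constructor
    · intro i j hi hj
      have hi' : i = s := by
        by_contra hcon
        exact hta ((h2 i hcon).symm.trans hi)
      have hj' : j = s := by
        by_contra hcon
        exact hta ((h2 j hcon).symm.trans hj)
      rw [hi', hj']
    · intro z w hzw
      by_cases hz : z = s
      · subst hz
        have hw' : w ≠ s := fun h => hzw (by rw [h])
        rw [← h2 w hw']
      · rw [h3 z hz]
        by_cases hw' : w = s
        · rw [hw']
        · exact absurd ((h2 z hz).trans (h2 w hw').symm) hzw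
  · rintro ⟨huniq, hcompl⟩ w
    have hcard2 : (Finset.image η Finset.univ).card = 2 := hrank
    obtain ⟨b, hbmem, hba⟩ :=
      Finset.exists_mem_ne (by rw [hcard2]; omega) (η s)
    obtain ⟨z₀, -, hz₀⟩ := Finset.mem_image.mp hbmem
    have himg : Finset.image η Finset.univ = {η s, b} := by
      refine (Finset.eq_of_subset_of_card_le ?_ ?_).symm
      · intro y hy
        rcases Finset.mem_insert.mp hy with h | h
        · rw [h]
          exact Finset.mem_image_of_mem η (Finset.mem_univ s)
        · rw [Finset.mem_singleton.mp h]
          exact hbmem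
      · rw [Finset.card_pair (Ne.symm hba), hcard2]
    have hmem : ∀ z, η z = η s ∨ η z = b := by
      intro z
      have hz : η z ∈ Finset.image η Finset.univ :=
        Finset.mem_image_of_mem η (Finset.mem_univ z)
      rw [himg] at hz
      simpa using hz
    have hz_ne : ∀ z, z ≠ s → η z = b := by
      intro z hz
      rcases hmem z with h | h
      · exact absurd (huniq z s h rfl) hz
      · exact h
    have hθs : θ s = b := by
      rw [hcompl s z₀ (by rw [hz₀]; exact fun h => hba h.symm)]
      exact hz₀
    have hθz : ∀ z, z ≠ s → θ z = η s := by
      intro z hz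
      exact hcompl z s (by rw [hz_ne z hz]; exact hba)
    have L : ∀ (ψ : Fin n → Fin n) (u v : Fin n), ψ s = u → (∀ z, z ≠ s → ψ z = v) →
        (StarFinal M (fun q => M.evalFrom (ψ q) w) ↔
          (M.evalFrom u w = s ∨ M.evalFrom v w = s)) := by
      intro ψ u v hsu hv
      rw [SF']
      constructor
      · rintro ⟨m, hm, h⟩
        by_contra hcon
        push_neg at hcon
        have hq : ∀ q, M.evalFrom (ψ q) w ≠ s := by
          intro q
          by_cases hqs : q = s
          · rw [hqs, hsu]; exact hcon.1
          · rw [hv q hqs]; exact hcon.2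
        obtain ⟨m', rfl⟩ : ∃ m', m = m' + 1 := ⟨m - 1, by omega⟩
        rw [Function.iterate_succ_apply'] at h
        exact hq _ h
      · rintro (h | h)
        · refine ⟨1, le_refl 1, ?_⟩
          show M.evalFrom (ψ s) w = s
          rw [hsu]; exact h
        · by_cases h1 : M.evalFrom u w = s
          · refine ⟨1, le_refl 1, ?_⟩
            show M.evalFrom (ψ s) w = s
            rw [hsu]; exact h1
          · refine ⟨2, by omega, ?_⟩
            show M.evalFrom (ψ (M.evalFrom (ψ s) w)) w = s
            rw [hsu, hv _ h1]
            exact h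
    rw [L η (η s) b rfl hz_ne, L θ b (η s) hθs hθz]
    exact or_comm
end

section
/- Let k ≥ 2 and l ≥ 3 be coprime integers with k + l = n, let X_n ⊆ T_n generate a submonoid M_n with U_{k,l} ⊆ M_n, and let Σ be an alphabet with |Σ| ≥ |X_n|. Let η, θ ∈ M_n with η ≠ θ. If both η and θ have rank ≥ 3, then η and θ are not equivalent states in A*_{Σ,X_n}. -/
lemma twoCycle_injective (n k : ℕ) (hk : 2 ≤ k) (hkn : k < n) :
    Function.Injective (twoCycle n k) := by
  intro i j h
  have hi := i.isLt; have hj := j.isLt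
  have key : ∀ v : ℕ, v < n →
      (if v + 1 = k then 0 else if v + 1 = n then k else v + 1) % n
      = (if v + 1 = k then 0 else if v + 1 = n then k else v + 1) := by
    intro v hv
    apply Nat.mod_eq_of_lt
    split_ifs <;> omega
  have h' : (if i.val + 1 = k then 0 else if i.val + 1 = n then k else i.val + 1)
      = (if j.val + 1 = k then 0 else if j.val + 1 = n then k else j.val + 1) := by
    have h2 := congrArg Fin.val h
    simpa [twoCycle, key _ hi, key _ hj] using h2
  apply Fin.ext
  split_ifs at h' <;> omega

/-- **Lemma 3.17.** In the setting of the construction `A_{Σ,X_n}` (with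
`U_{k,l} ⊆ M_n` for coprime `k ≥ 2`, `l ≥ 3`, `k + l = n`): if `η ≠ θ` lie in `M_n`
and both have rank at least `3`, then `η` and `θ` are not equivalent states of
`A*_{Σ,X_n}`. -/
theorem lemma_3_17 (n k l : ℕ) (hk : 2 ≤ k) (hl : 3 ≤ l)
    (hco : Nat.Coprime k l) (hn : k + l = n)
    (X : Set (Fin n → Fin n)) (hXfin : X.Finite) (hU : Ukl n k ⊆ MGen X)
    {A : Type} [Fintype A] (hcard : X.ncard ≤ Fintype.card A)
    (M : DFA A (Fin n)) (hM : IsCanonical X M)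
    (η θ : Fin n → Fin n) (hη : η ∈ MGen X) (hθ : θ ∈ MGen X) (hne : η ≠ θ)
    (hrankη : 3 ≤ rank η) (hrankθ : 3 ≤ rank θ) :
    ¬ StarEquiv M η θ := by
  intro hEquiv
  have hn5 : 5 ≤ n := by omega
  have hnpos : 0 < n := by omega
  have hkn : k < n := by omega
  obtain ⟨hstart0, haccept, Ψ, hstep, S, hbij, hSid⟩ := hM
  set z0 : Fin n := ⟨0, hnpos⟩ with hz0def
  have hstart : M.start = z0 := Fin.ext (by simpa using hstart0)
  -- Combinatorial step: find p, c with an asymmetric return condition.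
  obtain ⟨z, hz⟩ : ∃ z, η z ≠ θ z := Function.ne_iff.mp hne
  obtain ⟨p, c, hc, hxor⟩ :
      ∃ p c : Fin n, c ≠ z0 ∧
        Xor' (η z0 = p ∨ η c = p) (θ z0 = p ∨ θ c = p) := by
    by_cases h0 : η z0 = θ z0
    · -- disagreement point z ≠ z0
      have hzz0 : z ≠ z0 := by rintro rfl; exact hz h0
      by_cases h1 : θ z0 = η z
      · refine ⟨θ z, z, hzz0, Or.inr ⟨Or.inr rfl, ?_⟩⟩
        rintro (h2 | h2)
        · rw [h0] at h2; rw [h2] at h1; exact hz h1.symm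
        · exact hz h2
      · refine ⟨η z, z, hzz0, Or.inl ⟨Or.inr rfl, ?_⟩⟩
        rintro (h2 | h2)
        · exact h1 h2
        · exact hz h2.symm
    · -- η z0 ≠ θ z0 : use rank θ ≥ 3 to find c ≠ z0 with θ c ≠ η z0
      obtain ⟨c, hc1, hc2⟩ : ∃ c : Fin n, c ≠ z0 ∧ θ c ≠ η z0 := by
        by_contra hcc
        push_neg at hcc
        have hsub : Finset.image θ Finset.univ ⊆ {θ z0, η z0} := by
          intro x hx
          simp only [Finset.mem_image] at hx
          obtain ⟨q, -, rfl⟩ := hx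
          by_cases hq : q = z0
          · subst hq; simp
          · simp [hcc q hq]
        have hle := Finset.card_le_card hsub
        have h2 : ({θ z0, η z0} : Finset (Fin n)).card ≤ 2 :=
          le_trans (Finset.card_insert_le _ _) (by simp)
        have : rank θ ≤ 2 := le_trans hle h2
        omega
      refine ⟨η z0, c, hc1, Or.inl ⟨Or.inl rfl, ?_⟩⟩
      rintro (h2 | h2)
      · exact h0 h2.symm
      · exact hc2 h2
  -- The separating transformation σ
  set σ : Fin n → Fin n := fun x => if x = p then z0 else c with hσdef
  -- cross-block collapse witnesses
  obtain ⟨i, hik, hip⟩ : ∃ i : Fin n, i.val < k ∧ i ≠ p := by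
    rcases eq_or_ne p.val 0 with h | h
    · exact ⟨⟨1, by omega⟩, show (1 : ℕ) < k by omega,
        Fin.ne_of_val_ne (show (1 : ℕ) ≠ p.val by omega)⟩
    · exact ⟨⟨0, hnpos⟩, show (0 : ℕ) < k by omega,
        Fin.ne_of_val_ne (show (0 : ℕ) ≠ p.val by omega)⟩
  obtain ⟨j, hjk, hjp⟩ : ∃ j : Fin n, k ≤ j.val ∧ j ≠ p := by
    rcases eq_or_ne p.val k with h | h
    · exact ⟨⟨k + 1, by omega⟩, show k ≤ k + 1 by omega,
        Fin.ne_of_val_ne (show k + 1 ≠ p.val by omega)⟩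
    · exact ⟨⟨k, by omega⟩, show k ≤ k by omega,
        Fin.ne_of_val_ne (show k ≠ p.val by omega)⟩
  have hij : i ≠ j := Fin.ne_of_val_ne (by omega)
  have hσij : σ i = σ j := by simp [hσdef, hip, hjp]
  -- σ ∈ U_{k,l}
  have hσU : σ ∈ Ukl n k := by
    refine Or.inr ⟨⟨⟨i, j, hik, hjk, hσij⟩, ?_⟩, ?_⟩
    · -- a point of the second block missing from the image
      obtain ⟨m, hmk, hmc⟩ : ∃ m : Fin n, k ≤ m.val ∧ m ≠ c := by
        rcases eq_or_ne c.val k with h | h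
        · exact ⟨⟨k + 1, by omega⟩, show k ≤ k + 1 by omega,
            Fin.ne_of_val_ne (show k + 1 ≠ c.val by omega)⟩
        · exact ⟨⟨k, by omega⟩, show k ≤ k by omega,
            Fin.ne_of_val_ne (show k ≠ c.val by omega)⟩
      refine ⟨m, hmk, ?_⟩
      rintro ⟨x, hx⟩
      simp only [hσdef] at hx
      split_ifs at hx
      · have := congrArg Fin.val hx
        simp [hz0def] at this
        omega
      · exact hmc hx.symm
    · rintro ⟨m, hm1, hm2⟩
      have hinj : Function.Injective σ := by
        rw [hm2]; exact (twoCycle_injective n k hk hkn).iterate m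
      exact hij (hinj hσij)
  have hσM : σ ∈ MGen X := hU hσU
  -- every element of MGen X is realized by a word
  have hword : ∀ L : List (Fin n → Fin n), (∀ g ∈ L, g ∈ X) →
      ∃ w : List A, ∀ q, M.evalFrom q w = L.foldr (· ∘ ·) id q := by
    intro L
    induction L with
    | nil => exact fun _ => ⟨[], fun q => rfl⟩
    | cons g t ih =>
      intro hL
      obtain ⟨w, hw⟩ := ih fun x hx => hL x (List.mem_cons_of_mem _ hx)
      obtain ⟨a, -, haΨ⟩ := hbij.2.2 (hL g List.mem_cons_self)
      refine ⟨w ++ [a], fun q => ?_⟩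
      rw [DFA.evalFrom_append_singleton, hw, hstep, haΨ]
      rfl
  obtain ⟨L, hL, hσL⟩ := hσM
  obtain ⟨w, hw⟩ := hword L hL
  have hwσ : ∀ q, M.evalFrom q w = σ q := by intro q; rw [hw q, ← hσL]
  -- iterate analysis of q ↦ σ (ρ q)
  have hiter : ∀ ρ : Fin n → Fin n,
      (∃ m, 1 ≤ m ∧ (fun q => σ (ρ q))^[m] z0 = z0) ↔ (ρ z0 = p ∨ ρ c = p) := by
    intro ρ
    constructor
    · rintro ⟨m, hm1, hm2⟩
      by_contra hcon
      push_neg at hcon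
      have hall : ∀ i, 1 ≤ i → (fun q => σ (ρ q))^[i] z0 = c := by
        intro i hi
        induction i with
        | zero => omega
        | succ i ih =>
          rcases Nat.eq_zero_or_pos i with h0 | hpos
          · subst h0
            simp [hσdef, hcon.1]
          · rw [Function.iterate_succ_apply', ih hpos]
            simp [hσdef, hcon.2]
      exact hc ((hall m hm1).symm.trans hm2)
    · intro hor
      by_cases h1 : ρ z0 = p
      · exact ⟨1, le_refl 1, by simp [hσdef, h1]⟩
      · have h2 : ρ c = p := hor.resolve_left h1
        refine ⟨2, by omega, ?_⟩
        have hstep1 : (fun q => σ (ρ q)) z0 = c := by simp [hσdef, h1]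
        calc (fun q => σ (ρ q))^[2] z0
            = (fun q => σ (ρ q)) ((fun q => σ (ρ q)) z0) := by
              rw [Function.iterate_succ_apply', Function.iterate_one]
          _ = z0 := by rw [hstep1]; simp [hσdef, h2]
  -- translate StarFinal
  have hSF : ∀ ρ : Fin n → Fin n,
      StarFinal M ρ ↔ ∃ m, 1 ≤ m ∧ ρ^[m] z0 = z0 := by
    intro ρ
    unfold StarFinal
    rw [hstart, haccept]
    constructor <;> rintro ⟨m, hm, h⟩ <;> refine ⟨m, hm, ?_⟩
    · exact Fin.ext (by simpa using h)
    · rw [h]; rfl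
  -- conclude
  have hEw := hEquiv w
  have e1 : (fun q => M.evalFrom (η q) w) = fun q => σ (η q) :=
    funext fun q => hwσ (η q)
  have e2 : (fun q => M.evalFrom (θ q) w) = fun q => σ (θ q) :=
    funext fun q => hwσ (θ q)
  rw [e1, e2, hSF, hSF, hiter η, hiter θ] at hEw
  rcases hxor with ⟨ha, hb⟩ | ⟨hb, ha⟩
  · exact hb (hEw.mp ha)
  · exact ha (hEw.mpr hb)
end

section
/- For every integer n ≥ 1, if M is a submonoid of T_n with |M| > n^n − n(n−1)/2, then M = T_n. -/
/-- **Lemma 3.23.** For `n ≥ 1`, every submonoid `M` of `T_n` (a set of transformations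
of `Fin n` containing the identity and closed under composition) with
`|M| > n^n - n(n-1)/2` is all of `T_n`. -/
theorem lemma_3_23 (n : ℕ) (hn : 1 ≤ n) (M : Set (Fin n → Fin n))
    (hid : id ∈ M) (hcomp : ∀ f ∈ M, ∀ g ∈ M, g ∘ f ∈ M)
    (hcard : n ^ n < M.ncard + n * (n - 1) / 2) :
    M = Set.univ := by
  classical
  -- total count
  have htot : M.ncard + Mᶜ.ncard = n ^ n := by
    rw [Set.ncard_add_ncard_compl]
    simp [Nat.card_eq_fintype_card]
  have hA : Mᶜ.ncard < n * (n - 1) / 2 := by omega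
  -- powers of permutations in M
  have hpow : ∀ (σ : Equiv.Perm (Fin n)), ⇑σ ∈ M → ∀ k, ⇑(σ ^ k) ∈ M := by
    intro σ hσ k
    induction k with
    | zero => simpa using hid
    | succ k ih =>
      simpa [pow_succ, Equiv.Perm.coe_mul] using hcomp _ hσ _ ih
  have hinv : ∀ (σ : Equiv.Perm (Fin n)), ⇑σ ∈ M → ⇑σ⁻¹ ∈ M := by
    intro σ hσ
    have ho : 0 < orderOf σ := orderOf_pos σ
    have h1 : σ * σ ^ (orderOf σ - 1) = 1 := by
      rw [← pow_succ', Nat.sub_add_cancel ho]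
      exact pow_orderOf_eq_one σ
    rw [inv_eq_of_mul_eq_one_right h1]
    exact hpow σ hσ _
  -- the subgroup of permutations in M
  let G : Subgroup (Equiv.Perm (Fin n)) :=
    { carrier := {σ | ⇑σ ∈ M}
      one_mem' := by simpa using hid
      mul_mem' := by
        intro a b ha hb
        simpa [Equiv.Perm.coe_mul] using hcomp _ hb _ ha
      inv_mem' := by
        intro a ha
        exact hinv a ha }
  have hfac : n * (n - 1) ≤ Nat.factorial n := by
    calc n * (n - 1) ≤ n * Nat.factorial (n - 1) :=
          Nat.mul_le_mul_left n (Nat.self_le_factorial _)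
    _ = Nat.factorial n := Nat.mul_factorial_pred (by omega)
  have hcardPerm : Nat.card (Equiv.Perm (Fin n)) = Nat.factorial n := by
    simp [Nat.card_eq_fintype_card, Fintype.card_perm, Fintype.card_fin]
  -- all permutations are in M
  have hperm : ∀ σ : Equiv.Perm (Fin n), ⇑σ ∈ M := by
    by_contra h
    push_neg at h
    obtain ⟨σ0, hσ0⟩ := h
    have hGne : G ≠ ⊤ := by
      intro hG
      exact hσ0 (by rw [hG] at *; exact Subgroup.mem_top σ0 : σ0 ∈ G)
    have hind0 : G.index ≠ 0 := Subgroup.index_ne_zero_of_finite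
    have hind1 : G.index ≠ 1 := fun h1 => hGne (Subgroup.index_eq_one.mp h1)
    have hmul : G.index * Nat.card G = Nat.card (Equiv.Perm (Fin n)) :=
      Subgroup.index_mul_card G
    have hhalf : 2 * Nat.card G ≤ Nat.factorial n := by
      rw [hcardPerm] at hmul
      have hge2 : 2 ≤ G.index := by omega
      calc 2 * Nat.card G ≤ G.index * Nat.card G := Nat.mul_le_mul_right _ hge2
        _ = Nat.factorial n := hmul
    -- set-theoretic counting
    have himg : (fun σ : Equiv.Perm (Fin n) => ⇑σ) '' ((G : Set (Equiv.Perm (Fin n)))ᶜ) ⊆ Mᶜ := by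
      rintro _ ⟨σ, hσ, rfl⟩
      exact hσ
    have hinj : Set.InjOn (fun σ : Equiv.Perm (Fin n) => ⇑σ) ((G : Set (Equiv.Perm (Fin n)))ᶜ) :=
      fun a _ b _ hab => Equiv.coe_fn_injective hab
    have h1 : ((fun σ : Equiv.Perm (Fin n) => ⇑σ) '' ((G : Set (Equiv.Perm (Fin n)))ᶜ)).ncard
        = ((G : Set (Equiv.Perm (Fin n)))ᶜ).ncard := Set.ncard_image_of_injOn hinj
    have h2 : ((fun σ : Equiv.Perm (Fin n) => ⇑σ) '' ((G : Set (Equiv.Perm (Fin n)))ᶜ)).ncard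
        ≤ Mᶜ.ncard := Set.ncard_le_ncard himg (Set.toFinite _)
    have h3 : (G : Set (Equiv.Perm (Fin n))).ncard + ((G : Set (Equiv.Perm (Fin n)))ᶜ).ncard
        = Nat.factorial n := by
      rw [Set.ncard_add_ncard_compl, hcardPerm]
    have h4 : Nat.card G = (G : Set (Equiv.Perm (Fin n))).ncard := by
      rw [← Nat.card_coe_set_eq]
      rfl
    rw [h4] at hhalf
    rw [h1] at h2
    generalize hq : n * (n - 1) = q at hA hfac
    omega
  -- some elementary map is in M
  have helem0 : ∃ c d : Fin n, c ≠ d ∧ Function.update id c d ∈ M := by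
    by_contra h
    push_neg at h
    set S := (fun p : Fin n × Fin n => Function.update id p.1 p.2) ''
      {p : Fin n × Fin n | p.1 ≠ p.2} with hSdef
    have hS : S ⊆ Mᶜ := by
      rintro _ ⟨⟨c, d⟩, hcd, rfl⟩
      exact h c d hcd
    have hinj : Set.InjOn (fun p : Fin n × Fin n => Function.update id p.1 p.2)
        {p : Fin n × Fin n | p.1 ≠ p.2} := by
      rintro ⟨c, d⟩ hcd ⟨c', d'⟩ hcd' heq
      simp only [Set.mem_setOf_eq] at hcd hcd'
      have h1 := congrFun heq c
      simp only [Function.update_self] at h1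
      by_cases hcc : c = c'
      · subst hcc
        rw [Function.update_self] at h1
        simp [h1]
      · rw [Function.update_of_ne hcc] at h1
        simp only [id_eq] at h1
        exact absurd h1.symm hcd
    have hdom : {p : Fin n × Fin n | p.1 ≠ p.2}.ncard = n * n - n := by
      have hset : {p : Fin n × Fin n | p.1 ≠ p.2} = ↑(Finset.univ.offDiag : Finset (Fin n × Fin n)) := by
        ext p
        simp [Finset.mem_offDiag]
      rw [hset, Set.ncard_coe_finset, Finset.offDiag_card]
      simp
    have hS1 : S.ncard = n * n - n := by
      rw [hSdef, Set.ncard_image_of_injOn hinj, hdom]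
    have hS2 : S.ncard ≤ Mᶜ.ncard := Set.ncard_le_ncard hS (Set.toFinite _)
    have hq' : n * n - n = n * (n - 1) := (Nat.mul_pred n n).symm
    rw [hq'] at hS1
    generalize hq : n * (n - 1) = q at hA hS1
    omega
  -- all elementary maps are in M
  have helem : ∀ c d : Fin n, c ≠ d → Function.update id c d ∈ M := by
    obtain ⟨c0, d0, hcd0, h0⟩ := helem0
    intro c d hcd
    set s1 := Equiv.swap c c0 with hs1
    set s2 := Equiv.swap (s1 d) d0 with hs2
    set p := s1.trans s2 with hp
    have hs1d : s1 d ≠ c0 := by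
      intro hh
      apply hcd
      have : s1 d = s1 c := by rw [hh, hs1, Equiv.swap_apply_left]
      exact (s1.injective this).symm ▸ rfl
    have hpc : p c = c0 := by
      rw [hp]
      simp only [Equiv.trans_apply]
      rw [hs1, Equiv.swap_apply_left, hs2]
      exact Equiv.swap_apply_of_ne_of_ne (Ne.symm hs1d) hcd0
    have hpd : p d = d0 := by
      rw [hp]
      simp only [Equiv.trans_apply]
      rw [hs2, Equiv.swap_apply_left]
    have hkey : Function.update id c d = ⇑p⁻¹ ∘ Function.update id c0 d0 ∘ ⇑p := by
      funext x
      by_cases hx : x = c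
      · subst hx
        simp only [Function.comp_apply]
        rw [hpc, Function.update_self, Function.update_self, ← hpd,
          Equiv.Perm.inv_def, Equiv.symm_apply_apply]
      · have hpx : p x ≠ c0 := by
          rw [← hpc]
          exact fun hh => hx (p.injective hh)
        simp only [Function.comp_apply, Function.update_of_ne hx, Function.update_of_ne hpx, id_eq]
        simp [Equiv.symm_apply_apply]
    rw [hkey]
    have step1 : Function.update id c0 d0 ∘ ⇑p ∈ M := hcomp _ (hperm p) _ h0
    exact hcomp _ step1 _ (hperm p⁻¹)
  -- main induction on corank
  have key : ∀ k (f : Fin n → Fin n), n ≤ (Finset.image f Finset.univ).card + k → f ∈ M := by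
    intro k
    induction k with
    | zero =>
      intro f hf
      have him : Finset.image f Finset.univ = Finset.univ := by
        apply Finset.eq_univ_of_card
        have hle : (Finset.image f Finset.univ).card ≤ Fintype.card (Fin n) :=
          Finset.card_le_univ _
        simp only [Fintype.card_fin] at *
        omega
      have hsurj : Function.Surjective f := by
        intro y
        have : y ∈ Finset.image f Finset.univ := by rw [him]; exact Finset.mem_univ y
        obtain ⟨x, _, hx⟩ := Finset.mem_image.mp this
        exact ⟨x, hx⟩
      have hb : Function.Bijective f := Finite.surjective_iff_bijective.mp hsurj
      exact hperm (Equiv.ofBijective f hb)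
    | succ k ih =>
      intro f hf
      by_cases hk : n ≤ (Finset.image f Finset.univ).card + k
      · exact ih f hk
      · push_neg at hk
        have hr : (Finset.image f Finset.univ).card < n := by omega
        -- c outside the image
        have hcex : ∃ c, c ∉ Finset.image f Finset.univ := by
          by_contra hc
          push_neg at hc
          have : (Finset.univ : Finset (Fin n)) ⊆ Finset.image f Finset.univ :=
            fun x _ => hc x
          have := Finset.card_le_card this
          simp only [Finset.card_univ, Fintype.card_fin] at this
          omega
        obtain ⟨c, hc⟩ := hcex
        -- f not injective
        have hni : ¬ Function.Injective f := by
          intro hi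
          have := Finset.card_image_of_injective (Finset.univ : Finset (Fin n)) hi
          simp only [Finset.card_univ, Fintype.card_fin] at this
          omega
        rw [Function.not_injective_iff] at hni
        obtain ⟨a, b, hfab, hab⟩ := hni
        set g := Function.update f a c with hg
        have hsub : insert c (Finset.image f Finset.univ) ⊆ Finset.image g Finset.univ := by
          intro y hy
          rw [Finset.mem_insert] at hy
          rcases hy with hy | hy
          · subst hy
            exact Finset.mem_image.mpr ⟨a, Finset.mem_univ a, by rw [hg, Function.update_self]⟩
          · obtain ⟨x, _, hx⟩ := Finset.mem_image.mp hy
            by_cases hxa : x = a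
            · subst hxa
              refine Finset.mem_image.mpr ⟨b, Finset.mem_univ b, ?_⟩
              rw [hg, Function.update_of_ne (Ne.symm hab), ← hfab, hx]
            · exact Finset.mem_image.mpr ⟨x, Finset.mem_univ x, by
                rw [hg, Function.update_of_ne hxa, hx]⟩
        have hcardins : (insert c (Finset.image f Finset.univ)).card
            = (Finset.image f Finset.univ).card + 1 := Finset.card_insert_of_notMem hc
        have hgM : g ∈ M := by
          apply ih
          have := Finset.card_le_card hsub
          omega
        have hcfa : c ≠ f a := by
          intro hh
          exact hc (hh ▸ Finset.mem_image.mpr ⟨a, Finset.mem_univ a, rfl⟩)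
        have hfeq : f = Function.update id c (f a) ∘ g := by
          funext x
          by_cases hx : x = a
          · subst hx
            simp only [Function.comp_apply, hg]
            rw [Function.update_self, Function.update_self]
          · have hfx : f x ≠ c := by
              intro hh
              exact hc (hh ▸ Finset.mem_image.mpr ⟨x, Finset.mem_univ x, rfl⟩)
            simp only [Function.comp_apply, hg]
            rw [Function.update_of_ne hx, Function.update_of_ne hfx]
            rfl
        rw [hfeq]
        exact hcomp _ hgM _ (helem c (f a) hcfa)
  -- conclude
  ext f
  simp only [Set.mem_univ, iff_true]
  exact key n f (Nat.le_add_left n _)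
end
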